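/- arXiv:2009.14801 — 3 statements merged into one kernel-verified Lean document; each statement's English description precedes it below -/
import Mathlib

section
/- Let A be a unital associative algebra with automorphism σ, and let S ⊆ Z(A) be a multiplicative submonoid of central elements that is stable under σ and σ^{-1}. Then the image of S in the skew Laurent ring A[x, x^{-1}; σ] is a right Ore set, and the right Ore localization of A[x, x^{-1}; σ] at S is isomorphic to A_S[x, x^{-1}; σ], the skew Laurent ring over the localization A_S. -/
noncomputable section

open FreeAlgebra

/-- Generators for the skew Laurent polynomial ring `A[x,x⁻¹;σ]`. -/
inductive SLgen (A : Type) : Type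
  | incl : A → SLgen A
  | x : SLgen A
  | xinv : SLgen A

variable (k : Type) [Field k] (A : Type) [Ring A] [Algebra k A]

/-- Relations for the skew Laurent polynomial ring `A[x,x⁻¹;σ]`. -/
inductive SLrel (σ : A ≃ₐ[k] A) : FreeAlgebra k (SLgen A) → FreeAlgebra k (SLgen A) → Prop
  | add (a b : A) : SLrel σ (ι k (SLgen.incl (a + b))) (ι k (SLgen.incl a) + ι k (SLgen.incl b))
  | mul (a b : A) : SLrel σ (ι k (SLgen.incl (a * b))) (ι k (SLgen.incl a) * ι k (SLgen.incl b))
  | alg (c : k) : SLrel σ (ι k (SLgen.incl (algebraMap k A c))) (algebraMap k _ c)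
  | xxinv : SLrel σ (ι k SLgen.x * ι k SLgen.xinv) 1
  | xinvx : SLrel σ (ι k SLgen.xinv * ι k SLgen.x) 1
  | skew (a : A) : SLrel σ (ι k SLgen.x * ι k (SLgen.incl a)) (ι k (SLgen.incl (σ a)) * ι k SLgen.x)

/-- The skew Laurent polynomial ring `A[x,x⁻¹;σ]`. -/
abbrev SkewLaurent (σ : A ≃ₐ[k] A) : Type := RingQuot (SLrel k A σ)

variable (σ : A ≃ₐ[k] A)

/-- The canonical inclusion `A → A[x,x⁻¹;σ]`. -/
def SkewLaurent.incl (a : A) : SkewLaurent k A σ :=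
  RingQuot.mkAlgHom k (SLrel k A σ) (ι k (SLgen.incl a))

/-- The invertible generator `x` of `A[x,x⁻¹;σ]`. -/
def SkewLaurent.X : SkewLaurent k A σ :=
  RingQuot.mkAlgHom k (SLrel k A σ) (ι k SLgen.x)

/-- The inverse `x⁻¹` of the generator of `A[x,x⁻¹;σ]`. -/
def SkewLaurent.Xinv : SkewLaurent k A σ :=
  RingQuot.mkAlgHom k (SLrel k A σ) (ι k SLgen.xinv)

/-- Generators for a generalized Weyl algebra. -/
inductive Wgen (A : Type) : Type
  | incl : A → Wgen A
  | x : Wgen A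
  | y : Wgen A

/-- Relations for the generalized Weyl algebra `W_{a,σ}`. -/
inductive Wrel (σ : A ≃ₐ[k] A) (a : A) :
    FreeAlgebra k (Wgen A) → FreeAlgebra k (Wgen A) → Prop
  | add (u v : A) : Wrel σ a (ι k (Wgen.incl (u + v))) (ι k (Wgen.incl u) + ι k (Wgen.incl v))
  | mul (u v : A) : Wrel σ a (ι k (Wgen.incl (u * v))) (ι k (Wgen.incl u) * ι k (Wgen.incl v))
  | alg (c : k) : Wrel σ a (ι k (Wgen.incl (algebraMap k A c))) (algebraMap k _ c)
  | yx : Wrel σ a (ι k Wgen.y * ι k Wgen.x) (ι k (Wgen.incl a))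
  | xy : Wrel σ a (ι k Wgen.x * ι k Wgen.y) (ι k (Wgen.incl (σ a)))
  | xu (u : A) : Wrel σ a (ι k Wgen.x * ι k (Wgen.incl u)) (ι k (Wgen.incl (σ u)) * ι k Wgen.x)
  | yu (u : A) : Wrel σ a (ι k Wgen.y * ι k (Wgen.incl (σ u))) (ι k (Wgen.incl u) * ι k Wgen.y)

/-- The generalized Weyl algebra `W_{a,σ}`. -/
abbrev GWA (a : A) : Type := RingQuot (Wrel k A σ a)

/-- The canonical inclusion `A → W_{a,σ}`. -/
def GWA.incl (a : A) (u : A) : GWA k A σ a :=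
  RingQuot.mkAlgHom k (Wrel k A σ a) (ι k (Wgen.incl u))

/-- The generator `x` of `W_{a,σ}`. -/
def GWA.X (a : A) : GWA k A σ a :=
  RingQuot.mkAlgHom k (Wrel k A σ a) (ι k Wgen.x)

/-- The generator `y` of `W_{a,σ}`. -/
def GWA.Y (a : A) : GWA k A σ a :=
  RingQuot.mkAlgHom k (Wrel k A σ a) (ι k Wgen.y)


/-!
The coefficients of `d = ∑ xⁿ aₙ` in `A[x,x⁻¹;σ]` are well defined: left multiplication is a
faithful action on `ℤ →₀ A`, and it commutes with right multiplication of the coefficients by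
`s`, so `d s = 0` forces `aₙ s = 0` for all `n`. For central `s` the monomials satisfy
`σⁿ(s) (xⁿ a) = (xⁿ a) s`, and as the image of `S` is commutative, left multipliers of the
monomials combine into one for `d`; this gives both Ore conditions. The two maps between
`A[x,x⁻¹;σ]_S` and `A_S[x,x⁻¹;τ]` come from universal properties (the relations of the skew
Laurent ring, inversion of `S`) and are mutually inverse because they agree on generators.
-/

namespace OreLocalization

abbrev oreSetOfSubsetCenter {R : Type*} [Monoid R] {S : Submonoid R}
    (hS : (S : Set R) ⊆ Set.center R) : OreSet S where
  ore_right_cancel r₁ r₂ s h := ⟨s, by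
    rwa [← Semigroup.mem_center_iff.mp (hS s.2) r₁, ← Semigroup.mem_center_iff.mp (hS s.2) r₂]⟩
  oreNum r _ := r
  oreDenom _ s := s
  ore_eq r s := (Semigroup.mem_center_iff.mp (hS s.2) r).symm

variable {k : Type*} [CommSemiring k] {R : Type*} [Semiring R] [Algebra k R]
  {S : Submonoid R} [OreSet S] {B : Type*} [Semiring B] [Algebra k B]

variable (k S) in
def numeratorAlgHom : R →ₐ[k] OreLocalization S R :=
  { numeratorRingHom with commutes' := fun _ => rfl }

def liftAlgHom (f : R →ₐ[k] B) (hf : ∀ s : S, IsUnit (f s)) :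
    OreLocalization S R →ₐ[k] B :=
  { universalHom f.toRingHom (IsUnit.liftRight (f.toMonoidHom.comp S.subtype) hf)
      (fun s => (IsUnit.coe_liftRight (f.toMonoidHom.comp S.subtype) hf s).symm) with
    commutes' := fun c => (universalHom_commutes _ _ _).trans (f.commutes c) }

@[simp] lemma liftAlgHom_numeratorAlgHom (f : R →ₐ[k] B) (hf : ∀ s : S, IsUnit (f s)) (r : R) :
    liftAlgHom f hf (numeratorAlgHom k S r) = f r :=
  universalHom_commutes _ _ _

@[ext] lemma algHom_ext {φ₁ φ₂ : OreLocalization S R →ₐ[k] B}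
    (h : φ₁.comp (numeratorAlgHom k S) = φ₂.comp (numeratorAlgHom k S)) : φ₁ = φ₂ := by
  have hunit : ∀ s : S, IsUnit ((φ₂.comp (numeratorAlgHom k S)) s) :=
    fun s => (numerator_isUnit s).map φ₂
  have key : ∀ φ : OreLocalization S R →ₐ[k] B, φ.comp (numeratorAlgHom k S) =
      φ₂.comp (numeratorAlgHom k S) → φ = liftAlgHom _ hunit := fun φ hφ =>
    AlgHom.coe_ringHom_injective <| universalHom_unique _ _
      (fun s => (IsUnit.coe_liftRight ((φ₂.comp (numeratorAlgHom k S)).toMonoidHom.comp S.subtype)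
        hunit s).symm) _ fun r => DFunLike.congr_fun hφ r
  exact (key φ₁ h).trans (key φ₂ rfl).symm

lemma unit_mul_eq_mul_unit_of_numerator {f g : OreLocalization S R →ₐ[k] B} (u : Bˣ)
    (h : ∀ r, u * f (numeratorAlgHom k S r) = g (numeratorAlgHom k S r) * u)
    (x : OreLocalization S R) : u * f x = g x * u := by
  have hconj : (MulSemiringAction.toAlgHom k B (ConjAct.toConjAct u)).comp f = g :=
    algHom_ext <| AlgHom.ext fun r => by
      simp [ConjAct.units_smul_def, h r]
  have hx := DFunLike.congr_fun hconj x
  simp only [AlgHom.comp_apply, MulSemiringAction.toAlgHom_apply, ConjAct.units_smul_def,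
    ConjAct.ofConjAct_toConjAct] at hx
  rw [← hx, Units.inv_mul_cancel_right]

variable {R' : Type*} [Semiring R'] [Algebra k R'] {S' : Submonoid R'} [OreSet S']

def mapAlgHom (f : R →ₐ[k] R') (hf : ∀ s ∈ S, f s ∈ S') :
    OreLocalization S R →ₐ[k] OreLocalization S' R' :=
  liftAlgHom ((numeratorAlgHom k S').comp f) fun s => numerator_isUnit ⟨f s, hf s s.2⟩

@[simp] lemma mapAlgHom_numeratorAlgHom (f : R →ₐ[k] R') (hf : ∀ s ∈ S, f s ∈ S') (r : R) :
    mapAlgHom f hf (numeratorAlgHom k S r) = numeratorAlgHom k S' (f r) :=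
  liftAlgHom_numeratorAlgHom _ _ r

def mapAlgEquiv (e : R ≃ₐ[k] R') (he : ∀ s ∈ S, e s ∈ S') (he' : ∀ s ∈ S', e.symm s ∈ S) :
    OreLocalization S R ≃ₐ[k] OreLocalization S' R' :=
  AlgEquiv.ofAlgHom (mapAlgHom e (by simpa using he)) (mapAlgHom e.symm (by simpa using he'))
    (by ext; simp) (by ext; simp)

@[simp] lemma mapAlgEquiv_numeratorAlgHom (e : R ≃ₐ[k] R') (he : ∀ s ∈ S, e s ∈ S')
    (he' : ∀ s ∈ S', e.symm s ∈ S) (r : R) :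
    mapAlgEquiv e he he' (numeratorAlgHom k S r) = numeratorAlgHom k S' (e r) :=
  mapAlgHom_numeratorAlgHom _ (by simpa using he) r

end OreLocalization

theorem Ideal.exists_mem_mul_sum_mem {R ι : Type*} [Ring R] {T : Submonoid R}
    (hT : ∀ a ∈ T, ∀ b ∈ T, Commute a b) (I : Ideal R) (s : Finset ι) (r : ι → R)
    (h : ∀ i ∈ s, ∃ t ∈ T, t * r i ∈ I) : ∃ t ∈ T, t * ∑ i ∈ s, r i ∈ I := by
  classical
  induction s using Finset.induction_on with
  | empty => exact ⟨1, T.one_mem, by simp⟩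
  | insert i s hi ih =>
    obtain ⟨t₁, ht₁, h₁⟩ := h i (Finset.mem_insert_self i s)
    obtain ⟨t₂, ht₂, h₂⟩ := ih fun j hj => h j (Finset.mem_insert_of_mem hj)
    refine ⟨t₂ * t₁, T.mul_mem ht₂ ht₁, ?_⟩
    rw [Finset.sum_insert hi, mul_add, mul_assoc, (hT t₂ ht₂ t₁ ht₁).eq, mul_assoc]
    exact I.add_mem (I.mul_mem_left t₂ h₁) (I.mul_mem_left t₁ h₂)

namespace SkewLaurent

variable {k A}

lemma incl_add (a b : A) : incl k A σ (a + b) = incl k A σ a + incl k A σ b := by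
  simpa [incl] using RingQuot.mkAlgHom_rel k (SLrel.add (σ := σ) a b)

lemma incl_mul (a b : A) : incl k A σ (a * b) = incl k A σ a * incl k A σ b := by
  simpa [incl] using RingQuot.mkAlgHom_rel k (SLrel.mul (σ := σ) a b)

lemma incl_algebraMap (c : k) : incl k A σ (algebraMap k A c) = algebraMap k _ c := by
  simpa [incl] using RingQuot.mkAlgHom_rel k (SLrel.alg (σ := σ) c)

lemma X_mul_Xinv : X k A σ * Xinv k A σ = 1 := by
  simpa [X, Xinv] using RingQuot.mkAlgHom_rel k (SLrel.xxinv (σ := σ))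

lemma Xinv_mul_X : Xinv k A σ * X k A σ = 1 := by
  simpa [X, Xinv] using RingQuot.mkAlgHom_rel k (SLrel.xinvx (σ := σ))

lemma X_mul_incl (a : A) : X k A σ * incl k A σ a = incl k A σ (σ a) * X k A σ := by
  simpa [X, incl] using RingQuot.mkAlgHom_rel k (SLrel.skew (σ := σ) a)

def inclAlgHom : A →ₐ[k] SkewLaurent k A σ :=
  AlgHom.ofLinearMap
    { toFun := incl k A σ
      map_add' := incl_add σ
      map_smul' := fun c a => by
        rw [Algebra.smul_def, incl_mul, incl_algebraMap, ← Algebra.smul_def]; rfl }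
    (by simpa using incl_algebraMap σ 1) (incl_mul σ)

@[simp] lemma inclAlgHom_apply (a : A) : inclAlgHom σ a = incl k A σ a := rfl

def unitX : (SkewLaurent k A σ)ˣ := ⟨X k A σ, Xinv k A σ, X_mul_Xinv σ, Xinv_mul_X σ⟩

@[simp] lemma val_unitX : (unitX σ : SkewLaurent k A σ) = X k A σ := rfl

@[simp] lemma val_inv_unitX : ((unitX σ)⁻¹ : (SkewLaurent k A σ)ˣ) = Xinv k A σ := rfl

lemma Xinv_mul_incl (a : A) : Xinv k A σ * incl k A σ a = incl k A σ (σ.symm a) * Xinv k A σ := by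
  have h := X_mul_incl σ (σ.symm a)
  rw [AlgEquiv.apply_symm_apply] at h
  rw [← val_inv_unitX, Units.eq_mul_inv_iff_mul_eq, mul_assoc, val_unitX, ← h, ← val_unitX,
    Units.inv_mul_cancel_left]

lemma unitX_zpow_mul_incl (n : ℤ) (a : A) :
    ((unitX σ ^ n : (SkewLaurent k A σ)ˣ) : SkewLaurent k A σ) * incl k A σ a =
      incl k A σ ((σ ^ n) a) * ((unitX σ ^ n : (SkewLaurent k A σ)ˣ) : SkewLaurent k A σ) := by
  induction n using Int.induction_on generalizing a with
  | zero => simp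
  | succ n ih =>
    rw [zpow_add_one, zpow_add_one, AlgEquiv.mul_apply, Units.val_mul, mul_assoc, val_unitX,
      X_mul_incl, ← mul_assoc, ih, mul_assoc]
  | pred n ih =>
    rw [zpow_sub_one, zpow_sub_one, AlgEquiv.mul_apply, Units.val_mul, mul_assoc, val_inv_unitX,
      Xinv_mul_incl, ← mul_assoc, ih, mul_assoc]
    rfl

variable {B : Type*} [Semiring B] [Algebra k B]

def lift (f : A →ₐ[k] B) (u : Bˣ) (hu : ∀ a, u * f a = f (σ a) * u) :
    SkewLaurent k A σ →ₐ[k] B :=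
  RingQuot.liftAlgHom k ⟨FreeAlgebra.lift k (SLgen.rec f u ↑u⁻¹), by
    rintro _ _ (_ | _ | _ | _ | _ | _) <;> simp [hu]⟩

variable (f : A →ₐ[k] B) (u : Bˣ) (hu : ∀ a, u * f a = f (σ a) * u)

@[simp] lemma lift_incl (a : A) : lift σ f u hu (incl k A σ a) = f a := by
  simp [lift, incl]

@[simp] lemma lift_X : lift σ f u hu (X k A σ) = u := by
  simp [lift, X]

@[simp] lemma lift_Xinv : lift σ f u hu (Xinv k A σ) = ↑u⁻¹ := by
  simp [lift, Xinv]

@[elab_as_elim]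
lemma induction_on {P : SkewLaurent k A σ → Prop} (x : SkewLaurent k A σ)
    (incl : ∀ a, P (incl k A σ a)) (X : P (X k A σ)) (Xinv : P (Xinv k A σ))
    (add : ∀ x y, P x → P y → P (x + y)) (mul : ∀ x y, P x → P y → P (x * y)) : P x := by
  obtain ⟨z, rfl⟩ := RingQuot.mkAlgHom_surjective k _ x
  induction z using FreeAlgebra.induction with
  | grade0 c => simpa [incl_algebraMap] using incl (algebraMap k A c)
  | grade1 g => cases g; exacts [incl _, X, Xinv]
  | mul z w hz hw => simpa using mul _ _ hz hw
  | add z w hz hw => simpa using add _ _ hz hw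

@[ext] lemma algHom_ext {φ₁ φ₂ : SkewLaurent k A σ →ₐ[k] B}
    (hincl : φ₁.comp (inclAlgHom σ) = φ₂.comp (inclAlgHom σ)) (hX : φ₁ (X k A σ) = φ₂ (X k A σ)) :
    φ₁ = φ₂ := by
  have hXinv : φ₁ (Xinv k A σ) = φ₂ (Xinv k A σ) :=
    left_inv_eq_right_inv (a := φ₂ (X k A σ))
      (by rw [← hX, ← map_mul, Xinv_mul_X, map_one]) (by rw [← map_mul, X_mul_Xinv, map_one])
  refine RingQuot.ringQuot_ext' k _ _ (FreeAlgebra.hom_ext (funext fun g => ?_))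
  cases g with
  | incl a => exact DFunLike.congr_fun hincl a
  | x => exact hX
  | xinv => exact hXinv

section Map

variable {A' : Type} [Ring A'] [Algebra k A'] {σ' : A' ≃ₐ[k] A'}

def map (f : A →ₐ[k] A') (hf : ∀ a, f (σ a) = σ' (f a)) :
    SkewLaurent k A σ →ₐ[k] SkewLaurent k A' σ' :=
  lift σ ((inclAlgHom σ').comp f) (unitX σ') fun a => by simp [X_mul_incl, hf]

variable (f : A →ₐ[k] A') (hf : ∀ a, f (σ a) = σ' (f a))

@[simp] lemma map_incl (a : A) : map σ f hf (incl k A σ a) = incl k A' σ' (f a) := lift_incl ..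

@[simp] lemma map_X : map σ f hf (X k A σ) = X k A' σ' := lift_X ..

end Map

section NormalForm

-- `Finsupp.single_mul` would split `single n (a * v)` along the pointwise product of `ℤ →₀ A`.
attribute [-simp] Finsupp.single_mul

-- `f : ℤ →₀ A` stands for `∑ xⁿ f(n)`; as `a xⁿ = xⁿ σ⁻ⁿ(a)`, `a` acts on the `n`-th coefficient
-- by left multiplication with `σ⁻ⁿ(a)`.
def coeffMul : A →ₐ[k] Module.End k (ℤ →₀ A) :=
  AlgHom.ofLinearMap
    { toFun := fun a =>
        Finsupp.lsum k fun n => Finsupp.lsingle n ∘ₗ LinearMap.mulLeft k ((σ ^ (-n)) a)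
      map_add' := fun a b => Finsupp.lhom_ext fun n v => by simp [add_mul]
      map_smul' := fun c a => Finsupp.lhom_ext fun n v => by simp }
    (Finsupp.lhom_ext fun n v => by simp)
    (fun a b => Finsupp.lhom_ext fun n v => by simp)

@[simp] lemma coeffMul_single (a : A) (n : ℤ) (v : A) :
    coeffMul σ a (Finsupp.single n v) = Finsupp.single n ((σ ^ (-n)) a * v) := by
  simp [coeffMul]

variable (k A) in
def coeffShift : (Module.End k (ℤ →₀ A))ˣ :=
  LinearMap.GeneralLinearGroup.ofLinearEquiv (Finsupp.domLCongr (Equiv.addRight 1))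

@[simp] lemma coeffShift_single (n : ℤ) (v : A) :
    (coeffShift k A : Module.End k (ℤ →₀ A)) (Finsupp.single n v) =
      Finsupp.single (n + 1) v := by
  simp [coeffShift]

@[simp] lemma coeffShift_inv_single (n : ℤ) (v : A) :
    (↑(coeffShift k A)⁻¹ : Module.End k (ℤ →₀ A)) (Finsupp.single n v) =
      Finsupp.single (n - 1) v := by
  simp [coeffShift, ← LinearMap.GeneralLinearGroup.ofLinearEquiv_inv, sub_eq_add_neg]

lemma coeffShift_mul_coeffMul (a : A) :
    coeffShift k A * coeffMul σ a = coeffMul σ (σ a) * coeffShift k A :=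
  Finsupp.lhom_ext fun n v => by
    have h : (σ ^ (-(n + 1))) (σ a) = (σ ^ (-n)) a := by
      rw [← AlgEquiv.mul_apply, ← zpow_add_one, neg_add, neg_add_cancel_right]
    simp only [Module.End.mul_apply, coeffMul_single, coeffShift_single, h]

def regularRep : SkewLaurent k A σ →ₐ[k] Module.End k (ℤ →₀ A) :=
  lift σ (coeffMul σ) (coeffShift k A) (coeffShift_mul_coeffMul σ)

@[simp] lemma regularRep_incl (a : A) : regularRep σ (incl k A σ a) = coeffMul σ a :=
  lift_incl ..

@[simp] lemma regularRep_X : regularRep σ (X k A σ) = coeffShift k A :=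
  lift_X ..

@[simp] lemma regularRep_Xinv : regularRep σ (Xinv k A σ) = ↑(coeffShift k A)⁻¹ :=
  lift_Xinv ..

def ofCoeffs : (ℤ →₀ A) →ₗ[k] SkewLaurent k A σ :=
  Finsupp.lsum k fun n => LinearMap.mulLeft k (unitX σ ^ n : (SkewLaurent k A σ)ˣ).val ∘ₗ
    (inclAlgHom σ).toLinearMap

@[simp] lemma ofCoeffs_single (n : ℤ) (v : A) :
    ofCoeffs σ (Finsupp.single n v) =
      ((unitX σ ^ n : (SkewLaurent k A σ)ˣ) : _) * incl k A σ v :=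
  Finsupp.lsum_single ..

def coeffs (d : SkewLaurent k A σ) : ℤ →₀ A := regularRep σ d (Finsupp.single 0 1)

lemma mul_ofCoeffs (d : SkewLaurent k A σ) (f : ℤ →₀ A) :
    d * ofCoeffs σ f = ofCoeffs σ (regularRep σ d f) := by
  have of_single : ∀ d : SkewLaurent k A σ, (∀ n v, d * ofCoeffs σ (Finsupp.single n v) =
      ofCoeffs σ (regularRep σ d (Finsupp.single n v))) →
      ∀ f, d * ofCoeffs σ f = ofCoeffs σ (regularRep σ d f) := fun d h =>
    LinearMap.congr_fun (Finsupp.lhom_ext (φ := LinearMap.mulLeft k d ∘ₗ ofCoeffs σ)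
      (ψ := ofCoeffs σ ∘ₗ regularRep σ d) h)
  induction d using induction_on generalizing f with
  | incl a =>
    refine of_single _ (fun n v => ?_) f
    have h : (σ ^ n) ((σ ^ (-n)) a) = a := by
      rw [← AlgEquiv.mul_apply, ← zpow_add, add_neg_cancel, zpow_zero, AlgEquiv.one_apply]
    rw [regularRep_incl, coeffMul_single, ofCoeffs_single, ofCoeffs_single, incl_mul,
      ← mul_assoc, ← mul_assoc, unitX_zpow_mul_incl, h]
  | X => exact of_single _ (fun n v => by simp [← mul_assoc, add_comm n, zpow_add]) f
  | Xinv => exact of_single _ (fun n v => by simp [← mul_assoc, sub_eq_neg_add, zpow_add]) f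
  | add x y hx hy => simp [add_mul, hx, hy]
  | mul x y hx hy => simp [mul_assoc, hx, hy]

lemma ofCoeffs_coeffs (d : SkewLaurent k A σ) : ofCoeffs σ (coeffs σ d) = d := by
  rw [coeffs, ← mul_ofCoeffs, ofCoeffs_single, zpow_zero, Units.val_one, one_mul,
    ← inclAlgHom_apply, map_one, mul_one]

lemma regularRep_commute_mapRange_mulRight (d : SkewLaurent k A σ) (s : A) :
    Commute (regularRep σ d) (Finsupp.mapRange.linearMap (LinearMap.mulRight k s)) := by
  induction d using induction_on with
  | incl a => exact Finsupp.lhom_ext fun n v => by simp [mul_assoc]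
  | X => exact Finsupp.lhom_ext fun n v => by simp
  | Xinv => exact Finsupp.lhom_ext fun n v => by simp
  | add x y hx hy => simpa using hx.add_left hy
  | mul x y hx hy => simpa using hx.mul_left hy

lemma coeffs_mul_incl (d : SkewLaurent k A σ) (s : A) (n : ℤ) :
    coeffs σ (d * incl k A σ s) n = coeffs σ d n * s := by
  have h := LinearMap.congr_fun (regularRep_commute_mapRange_mulRight σ d s).eq
    (Finsupp.single 0 1)
  simp only [Module.End.mul_apply, Finsupp.mapRange.linearMap_apply,
    Finsupp.mapRange_single, LinearMap.mulRight_apply, one_mul] at h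
  rw [coeffs, coeffs, map_mul, Module.End.mul_apply, regularRep_incl, coeffMul_single, neg_zero,
    zpow_zero, AlgEquiv.one_apply, mul_one, h, Finsupp.mapRange_apply, LinearMap.mulRight_apply]

end NormalForm

section OreSet

variable {S : Submonoid A}

lemma mem_closure_incl_image {t : SkewLaurent k A σ} :
    t ∈ Submonoid.closure (incl k A σ '' S) ↔ ∃ s ∈ S, incl k A σ s = t := by
  have h := MonoidHom.map_mclosure (inclAlgHom σ) S
  rw [Submonoid.closure_eq] at h
  rw [← show _ = Submonoid.closure (incl k A σ '' S) from h]
  rfl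

lemma zpow_apply_mem (hσ : ∀ s ∈ S, σ s ∈ S) (hσ' : ∀ s ∈ S, σ.symm s ∈ S) {s : A}
    (hs : s ∈ S) (n : ℤ) : (σ ^ n) s ∈ S := by
  induction n using Int.induction_on with
  | zero => simpa using hs
  | succ n ih =>
    rw [add_comm, zpow_one_add, AlgEquiv.mul_apply]
    exact hσ _ ih
  | pred n ih =>
    rw [sub_eq_neg_add, zpow_add, zpow_neg_one, AlgEquiv.mul_apply]
    exact hσ' _ ih

lemma incl_zpow_mul_ofCoeffs_single {s : A} (hs : s ∈ Set.center A) (n : ℤ) (v : A) :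
    incl k A σ ((σ ^ n) s) * ofCoeffs σ (Finsupp.single n v) =
      ofCoeffs σ (Finsupp.single n v) * incl k A σ s := by
  rw [ofCoeffs_single, ← mul_assoc, ← unitX_zpow_mul_incl, mul_assoc, mul_assoc, ← incl_mul,
    ← incl_mul, Semigroup.mem_center_iff.mp hs v]

lemma exists_mem_closure_mul_ofCoeffs_mem (hcen : (S : Set A) ⊆ Set.center A)
    (hσ : ∀ s ∈ S, σ s ∈ S) (hσ' : ∀ s ∈ S, σ.symm s ∈ S) (I : Ideal (SkewLaurent k A σ))
    {s : A} (hs : s ∈ S) (f : ℤ →₀ A)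
    (hI : ∀ n, ofCoeffs σ (Finsupp.single n (f n)) * incl k A σ s ∈ I) :
    ∃ t ∈ Submonoid.closure (incl k A σ '' S), t * ofCoeffs σ f ∈ I := by
  have hT : ∀ a ∈ Submonoid.closure (incl k A σ '' S), ∀ b ∈ Submonoid.closure (incl k A σ '' S),
      Commute a b := by
    simp only [mem_closure_incl_image]
    rintro _ ⟨a, ha, rfl⟩ _ ⟨b, hb, rfl⟩
    rw [Commute, SemiconjBy, ← incl_mul, ← incl_mul, Semigroup.mem_center_iff.mp (hcen ha) b]
  conv in ofCoeffs σ f => rw [← f.sum_single, map_finsuppSum]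
  refine Ideal.exists_mem_mul_sum_mem hT I _ _ fun n _ => ⟨incl k A σ ((σ ^ n) s),
    Submonoid.subset_closure ⟨_, zpow_apply_mem σ hσ hσ' hs n, rfl⟩, ?_⟩
  rw [incl_zpow_mul_ofCoeffs_single σ (hcen hs)]
  exact hI n

abbrev oreSetClosureInclImage (hcen : (S : Set A) ⊆ Set.center A)
    (hσ : ∀ s ∈ S, σ s ∈ S) (hσ' : ∀ s ∈ S, σ.symm s ∈ S) :
    OreLocalization.OreSet (Submonoid.closure (incl k A σ '' S)) := by
  refine (OreLocalization.nonempty_oreSet_iff.mpr ⟨?_, ?_⟩).some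
  · rintro r₁ r₂ ⟨_, ht⟩ h
    obtain ⟨s, hs, rfl⟩ := (mem_closure_incl_image σ).mp ht
    have hd : (r₁ - r₂) * incl k A σ s = 0 := by rw [sub_mul, sub_eq_zero]; exact h
    obtain ⟨t, ht, h⟩ := exists_mem_closure_mul_ofCoeffs_mem σ hcen hσ hσ' ⊥ hs
      (coeffs σ (r₁ - r₂)) fun n => by
        rw [ofCoeffs_single, mul_assoc, ← incl_mul, ← coeffs_mul_incl, hd]
        simp [coeffs, ← inclAlgHom_apply]
    refine ⟨⟨t, ht⟩, ?_⟩
    rw [ofCoeffs_coeffs, Ideal.mem_bot, mul_sub, sub_eq_zero] at h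
    exact h
  · rintro r ⟨_, ht⟩
    obtain ⟨s, hs, rfl⟩ := (mem_closure_incl_image σ).mp ht
    obtain ⟨t, ht, h⟩ := exists_mem_closure_mul_ofCoeffs_mem σ hcen hσ hσ'
      (Ideal.span {incl k A σ s}) hs (coeffs σ r) fun n =>
        Ideal.mul_mem_left _ _ (Ideal.mem_span_singleton_self _)
    rw [ofCoeffs_coeffs, Ideal.mem_span_singleton'] at h
    obtain ⟨r', hr'⟩ := h
    exact ⟨r', ⟨t, ht⟩, hr'.symm⟩

end OreSet

section Localization

variable (S : Submonoid A) [OreLocalization.OreSet S]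
  (hσ : ∀ s ∈ S, σ s ∈ S) (hσ' : ∀ s ∈ S, σ.symm s ∈ S)
  [OreLocalization.OreSet (Submonoid.closure (incl k A σ '' S))]

open OreLocalization

def toSkewLaurentOreLocalization :
    OreLocalization (Submonoid.closure (incl k A σ '' S)) (SkewLaurent k A σ) →ₐ[k]
      SkewLaurent k (OreLocalization S A) (mapAlgEquiv σ hσ hσ') :=
  liftAlgHom (map σ (numeratorAlgHom k S) fun a => (mapAlgEquiv_numeratorAlgHom σ hσ hσ' a).symm)
    fun ⟨_, ht⟩ => by
      obtain ⟨s, hs, rfl⟩ := (mem_closure_incl_image σ).mp ht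
      rw [map_incl]
      exact (numerator_isUnit ⟨s, hs⟩).map (inclAlgHom _)

def oreLocalizationMapIncl :
    OreLocalization S A →ₐ[k]
      OreLocalization (Submonoid.closure (incl k A σ '' S)) (SkewLaurent k A σ) :=
  mapAlgHom (inclAlgHom σ) fun s hs => Submonoid.subset_closure ⟨s, hs, rfl⟩

def numeratorUnitX :
    (OreLocalization (Submonoid.closure (incl k A σ '' S)) (SkewLaurent k A σ))ˣ :=
  (unitX σ).map (numeratorAlgHom k _).toMonoidHom

lemma numeratorUnitX_mul_oreLocalizationMapIncl (a : OreLocalization S A) :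
    numeratorUnitX σ S * oreLocalizationMapIncl σ S a =
      oreLocalizationMapIncl σ S (mapAlgEquiv σ hσ hσ' a) * numeratorUnitX σ S :=
  unit_mul_eq_mul_unit_of_numerator (f := oreLocalizationMapIncl σ S)
    (g := (oreLocalizationMapIncl σ S).comp (mapAlgEquiv σ hσ hσ').toAlgHom)
    (numeratorUnitX σ S)
    (fun r => by simp [numeratorUnitX, oreLocalizationMapIncl, ← map_mul, X_mul_incl]) a

def ofSkewLaurentOreLocalization :
    SkewLaurent k (OreLocalization S A) (mapAlgEquiv σ hσ hσ') →ₐ[k]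
      OreLocalization (Submonoid.closure (incl k A σ '' S)) (SkewLaurent k A σ) :=
  lift _ (oreLocalizationMapIncl σ S) (numeratorUnitX σ S)
    (numeratorUnitX_mul_oreLocalizationMapIncl σ S hσ hσ')

def oreLocalizationEquiv :
    OreLocalization (Submonoid.closure (incl k A σ '' S)) (SkewLaurent k A σ) ≃ₐ[k]
      SkewLaurent k (OreLocalization S A) (mapAlgEquiv σ hσ hσ') :=
  AlgEquiv.ofAlgHom (toSkewLaurentOreLocalization σ S hσ hσ')
    (ofSkewLaurentOreLocalization σ S hσ hσ')
    (algHom_ext _ (OreLocalization.algHom_ext (AlgHom.ext fun r => by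
        simp [toSkewLaurentOreLocalization, ofSkewLaurentOreLocalization, oreLocalizationMapIncl,
          numeratorUnitX]))
      (by simp [toSkewLaurentOreLocalization, ofSkewLaurentOreLocalization, oreLocalizationMapIncl,
          numeratorUnitX]))
    (by
      apply OreLocalization.algHom_ext
      apply algHom_ext
      · ext a
        simp [toSkewLaurentOreLocalization, ofSkewLaurentOreLocalization, oreLocalizationMapIncl,
          numeratorUnitX]
      · simp [toSkewLaurentOreLocalization, ofSkewLaurentOreLocalization, oreLocalizationMapIncl,
          numeratorUnitX])

end Localization

end SkewLaurent

/-- For a σ-stable multiplicative submonoid `S` of central elements of `A`,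
the image of `S` in the skew Laurent ring `A[x,x⁻¹;σ]` is a right Ore set, and the Ore
localization of `A[x,x⁻¹;σ]` at (the submonoid generated by) this image is isomorphic to
the skew Laurent ring `A_S[x,x⁻¹;σ]` over the Ore localization `A_S`. -/
theorem skewLaurent_oreLocalization (S : Submonoid A) (hcen : (S : Set A) ⊆ Set.center A)
    (hst : ∀ s ∈ S, σ s ∈ S) (hst' : ∀ s ∈ S, σ.symm s ∈ S) :
    ∃ _hS : OreLocalization.OreSet S,
    ∃ _hT : OreLocalization.OreSet
        (Submonoid.closure (SkewLaurent.incl k A σ '' (S : Set A))),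
    ∃ τ : OreLocalization S A ≃ₐ[k] OreLocalization S A,
      (∀ u : A, τ (OreLocalization.numeratorRingHom u)
          = OreLocalization.numeratorRingHom (σ u)) ∧
      Nonempty
        (OreLocalization
            (Submonoid.closure (SkewLaurent.incl k A σ '' (S : Set A)))
            (SkewLaurent k A σ)
          ≃ₐ[k] SkewLaurent k (OreLocalization S A) τ) := by
  let _ := OreLocalization.oreSetOfSubsetCenter hcen
  let _ := SkewLaurent.oreSetClosureInclImage σ hcen hst hst'
  exact ⟨_, _, OreLocalization.mapAlgEquiv σ hst hst',
    OreLocalization.mapAlgEquiv_numeratorAlgHom σ hst hst',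
    ⟨SkewLaurent.oreLocalizationEquiv σ S hst hst'⟩⟩
end
end

section
/- Let k be a field of characteristic 0, A = k[c, t], a = c − t(t+1), and σ the k[c]-algebra automorphism of A with σ(t) = t − 1. Then the generalized Weyl algebra W_{a,σ} is isomorphic to the universal enveloping algebra U(sl₂) = k⟨E, F, H⟩/(HE − EH − 2E, HF − FH + 2F, EF − FE − H), via H ↦ 2t, E ↦ x, F ↦ y. -/
/-!
The map `U(sl₂) → W_{a,σ}`, `E ↦ x`, `F ↦ y`, `H ↦ 2t`, respects the relations of `U(sl₂)`
because `σ(2t) = 2t - 2` and `xy - yx = σ(a) - a = 2t`. Conversely the Casimir element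
`Ω = 4FE + H² + 2H` is central, so `c ↦ Ω/4`, `t ↦ H/2` defines `k[c,t] → U(sl₂)`; it sends
`a ↦ FE` and `σ(a) ↦ EF`, and conjugation by `E` and `F` acts on its image through `σ`, so it
extends to `W_{a,σ} → U(sl₂)` with `x ↦ E`, `y ↦ F`. The two maps are inverse on generators; the
only computation is `4yx + 2t(2t + 2) = 4c`.
-/

noncomputable section

open FreeAlgebra

variable (k : Type) [Field k] (A : Type) [Ring A] [Algebra k A]

variable (σ : A ≃ₐ[k] A)

/-- Relations of `U(sl₂)`: generators `0 = E`, `1 = F`, `2 = H` with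
`HE - EH = 2E`, `HF - FH = -2F`, `EF - FE = H`. -/
inductive SL2Rel : FreeAlgebra k (Fin 3) → FreeAlgebra k (Fin 3) → Prop
  | he : SL2Rel (ι k (2 : Fin 3) * ι k (0 : Fin 3))
      (ι k (0 : Fin 3) * ι k (2 : Fin 3) + 2 * ι k (0 : Fin 3))
  | hf : SL2Rel (ι k (2 : Fin 3) * ι k (1 : Fin 3))
      (ι k (1 : Fin 3) * ι k (2 : Fin 3) - 2 * ι k (1 : Fin 3))
  | ef : SL2Rel (ι k (0 : Fin 3) * ι k (1 : Fin 3))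
      (ι k (1 : Fin 3) * ι k (0 : Fin 3) + ι k (2 : Fin 3))

/-- The universal enveloping algebra `U(sl₂)`. -/
abbrev Usl2 : Type := RingQuot (SL2Rel k)

/-- The generator `E` of `U(sl₂)`. -/
def Usl2.E : Usl2 k := RingQuot.mkAlgHom k (SL2Rel k) (ι k (0 : Fin 3))
/-- The generator `F` of `U(sl₂)`. -/
def Usl2.F : Usl2 k := RingQuot.mkAlgHom k (SL2Rel k) (ι k (1 : Fin 3))
/-- The generator `H` of `U(sl₂)`. -/
def Usl2.H : Usl2 k := RingQuot.mkAlgHom k (SL2Rel k) (ι k (2 : Fin 3))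

namespace MvPolynomial
variable {ι R B : Type*} [CommSemiring R] [Semiring B] [Algebra R B]

open scoped IsMulCommutative in
def aevalOfCommute (v : ι → B) (hv : ∀ i j, Commute (v i) (v j)) :
    MvPolynomial ι R →ₐ[R] B :=
  have := Algebra.isMulCommutative_adjoin R (s := Set.range v)
    (by rintro _ ⟨i, rfl⟩ _ ⟨j, rfl⟩; exact hv i j)
  (Algebra.adjoin R (Set.range v)).val.comp
    (aeval (S₁ := Algebra.adjoin R (Set.range v)) fun i => ⟨v i, Algebra.subset_adjoin ⟨i, rfl⟩⟩)

@[simp]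
theorem aevalOfCommute_X (v : ι → B) (hv : ∀ i j, Commute (v i) (v j)) (i : ι) :
    aevalOfCommute (R := R) v hv (X i) = v i := by
  simp [aevalOfCommute]

theorem mul_algHom_eq_algHom_mul {f g : MvPolynomial ι R →ₐ[R] B} {e : B}
    (h : ∀ i, e * f (X i) = g (X i) * e) (p : MvPolynomial ι R) : e * f p = g p * e := by
  induction p using MvPolynomial.induction_on with
  | C r => simp only [← algebraMap_eq, AlgHom.commutes, Algebra.commutes]
  | add p q hp hq => rw [map_add, map_add, mul_add, add_mul, hp, hq]
  | mul_X p i hp => rw [map_mul, map_mul, ← mul_assoc, hp, mul_assoc, h, mul_assoc]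

end MvPolynomial

theorem ofNat_mul_eq_smul (k : Type*) {B : Type*} [CommSemiring k] [Semiring B] [Algebra k B]
    (n : ℕ) [n.AtLeastTwo] (x : B) : (ofNat(n) : B) * x = (ofNat(n) : k) • x := by
  rw [Algebra.smul_def, map_ofNat]

section Casimir
variable {R : Type*} [Ring R] {E F H : R}

theorem commute_E_casimir (he : H * E = E * H + 2 * E) (ef : E * F = F * E + H) :
    Commute E (4 * F * E + H * H + 2 * H) := by
  have key : E * (4 * F * E + H * H + 2 * H) - (4 * F * E + H * H + 2 * H) * E =
      4 * (E * F - (F * E + H)) * E - (H * E - (E * H + 2 * E)) * H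
        - H * (H * E - (E * H + 2 * E)) := by noncomm_ring
  rw [ef, he, sub_self, sub_self] at key
  exact sub_eq_zero.mp (by simpa using key)

theorem commute_F_casimir (hf : H * F = F * H - 2 * F) (ef : E * F = F * E + H) :
    Commute F (4 * F * E + H * H + 2 * H) := by
  have key : F * (4 * F * E + H * H + 2 * H) - (4 * F * E + H * H + 2 * H) * F =
      -4 * F * (E * F - (F * E + H)) - (H * F - (F * H - 2 * F)) * H
        - H * (H * F - (F * H - 2 * F)) := by noncomm_ring
  rw [ef, hf, sub_self, sub_self] at key
  exact sub_eq_zero.mp (by simpa using key)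

theorem commute_H_casimir (he : H * E = E * H + 2 * E) (hf : H * F = F * H - 2 * F) :
    Commute H (4 * F * E + H * H + 2 * H) := by
  have key : H * (4 * F * E + H * H + 2 * H) - (4 * F * E + H * H + 2 * H) * H =
      4 * (H * F - (F * H - 2 * F)) * E + 4 * F * (H * E - (E * H + 2 * E)) := by noncomm_ring
  rw [he, hf, sub_self, sub_self] at key
  exact sub_eq_zero.mp (by simpa using key)

end Casimir

namespace GWA
variable {k : Type} [Field k] {A : Type} [Ring A] [Algebra k A] {σ : A ≃ₐ[k] A} {a : A}

variable (σ a) in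
def inclHom : A →ₐ[k] GWA k A σ a where
  toFun := GWA.incl k A σ a
  map_one' := by simpa [GWA.incl] using RingQuot.mkAlgHom_rel k (Wrel.alg (σ := σ) (a := a) 1)
  map_mul' u v := RingQuot.mkAlgHom_rel k (Wrel.mul u v) |>.trans (map_mul _ _ _)
  map_zero' := by simpa [GWA.incl] using RingQuot.mkAlgHom_rel k (Wrel.alg (σ := σ) (a := a) 0)
  map_add' u v := RingQuot.mkAlgHom_rel k (Wrel.add u v) |>.trans (map_add _ _ _)
  commutes' c := RingQuot.mkAlgHom_rel k (Wrel.alg c) |>.trans (AlgHom.commutes _ _)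

theorem inclHom_apply (u : A) : inclHom σ a u = GWA.incl k A σ a u := rfl

theorem Y_mul_X : GWA.Y k A σ a * GWA.X k A σ a = inclHom σ a a :=
  (map_mul _ _ _).symm.trans (RingQuot.mkAlgHom_rel k Wrel.yx)

theorem X_mul_Y : GWA.X k A σ a * GWA.Y k A σ a = inclHom σ a (σ a) :=
  (map_mul _ _ _).symm.trans (RingQuot.mkAlgHom_rel k Wrel.xy)

theorem X_mul_inclHom (u : A) :
    GWA.X k A σ a * inclHom σ a u = inclHom σ a (σ u) * GWA.X k A σ a :=
  (map_mul _ _ _).symm.trans ((RingQuot.mkAlgHom_rel k (Wrel.xu u)).trans (map_mul _ _ _))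

theorem Y_mul_inclHom (u : A) :
    GWA.Y k A σ a * inclHom σ a (σ u) = inclHom σ a u * GWA.Y k A σ a :=
  (map_mul _ _ _).symm.trans ((RingQuot.mkAlgHom_rel k (Wrel.yu u)).trans (map_mul _ _ _))

variable {B : Type*} [Ring B] [Algebra k B]

def lift (f : A →ₐ[k] B) (x y : B) (hyx : y * x = f a) (hxy : x * y = f (σ a))
    (hx : ∀ u, x * f u = f (σ u) * x) (hy : ∀ u, y * f (σ u) = f u * y) :
    GWA k A σ a →ₐ[k] B :=
  RingQuot.liftAlgHom k ⟨FreeAlgebra.lift k (fun | .incl u => f u | .x => x | .y => y), by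
    intro _ _ h; cases h <;> simp [*]⟩

section lift
variable (f : A →ₐ[k] B) (x y : B) (hyx : y * x = f a) (hxy : x * y = f (σ a))
    (hx : ∀ u, x * f u = f (σ u) * x) (hy : ∀ u, y * f (σ u) = f u * y)

@[simp]
theorem lift_inclHom (u : A) : lift f x y hyx hxy hx hy (inclHom σ a u) = f u := by
  simp [lift, inclHom_apply, GWA.incl]

@[simp]
theorem lift_X : lift f x y hyx hxy hx hy (GWA.X k A σ a) = x := by
  simp [lift, GWA.X]

@[simp]
theorem lift_Y : lift f x y hyx hxy hx hy (GWA.Y k A σ a) = y := by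
  simp [lift, GWA.Y]

end lift

theorem algHom_ext {g h : GWA k A σ a →ₐ[k] B}
    (hA : g.comp (inclHom σ a) = h.comp (inclHom σ a))
    (hX : g (GWA.X k A σ a) = h (GWA.X k A σ a)) (hY : g (GWA.Y k A σ a) = h (GWA.Y k A σ a)) :
    g = h :=
  RingQuot.ringQuot_ext' k _ _ <| FreeAlgebra.hom_ext <| funext fun
    | Wgen.incl u => AlgHom.congr_fun hA u
    | .x => hX
    | .y => hY

end GWA

namespace Usl2
variable {k : Type} [Field k]

theorem H_mul_E : H k * E k = E k * H k + 2 * E k := by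
  simpa [H, E, map_ofNat] using RingQuot.mkAlgHom_rel k (SL2Rel.he (k := k))

theorem H_mul_F : H k * F k = F k * H k - 2 * F k := by
  simpa [H, F, map_ofNat] using RingQuot.mkAlgHom_rel k (SL2Rel.hf (k := k))

theorem E_mul_F : E k * F k = F k * E k + H k := by
  simpa [E, F, H] using RingQuot.mkAlgHom_rel k (SL2Rel.ef (k := k))

variable {B : Type*} [Ring B] [Algebra k B]

def lift (e f h : B) (he : h * e = e * h + 2 * e) (hf : h * f = f * h - 2 * f)
    (ef : e * f = f * e + h) : Usl2 k →ₐ[k] B :=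
  RingQuot.liftAlgHom k
    ⟨FreeAlgebra.lift k ![e, f, h], by rintro _ _ (_ | _ | _) <;> simpa [map_ofNat]⟩

section lift
variable (e f h : B) (he : h * e = e * h + 2 * e) (hf : h * f = f * h - 2 * f)
    (ef : e * f = f * e + h)

@[simp]
theorem lift_E : lift e f h he hf ef (E k) = e := by simp [lift, E]

@[simp]
theorem lift_F : lift e f h he hf ef (F k) = f := by simp [lift, F]

@[simp]
theorem lift_H : lift e f h he hf ef (H k) = h := by simp [lift, H]

end lift

theorem algHom_ext {g g' : Usl2 k →ₐ[k] B} (hE : g (E k) = g' (E k)) (hF : g (F k) = g' (F k))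
    (hH : g (H k) = g' (H k)) : g = g' :=
  RingQuot.ringQuot_ext' k _ _ <| FreeAlgebra.hom_ext <| funext fun i => by
    fin_cases i
    exacts [hE, hF, hH]

end Usl2

section Sl2Weyl
variable {k : Type} [Field k]

local notation "𝔠" => (MvPolynomial.X 0 : MvPolynomial (Fin 2) k)
local notation "𝔱" => (MvPolynomial.X 1 : MvPolynomial (Fin 2) k)
local notation "𝔞" => 𝔠 - 𝔱 * (𝔱 + 1)

namespace Usl2

variable (k) in
def casimir : Usl2 k := 4 * F k * E k + H k * H k + 2 * H k

variable (k) in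
def ofMvPolynomial : MvPolynomial (Fin 2) k →ₐ[k] Usl2 k :=
  MvPolynomial.aevalOfCommute ![(4⁻¹ : k) • casimir k, (2⁻¹ : k) • H k] <| by
    have h := ((commute_H_casimir (H_mul_E (k := k)) H_mul_F).smul_left (2⁻¹ : k)).smul_right
      (4⁻¹ : k)
    intro i j
    fin_cases i <;> fin_cases j
    exacts [Commute.refl _, h.symm, h, Commute.refl _]

@[simp]
theorem ofMvPolynomial_X_zero : ofMvPolynomial k 𝔠 = (4⁻¹ : k) • casimir k := by
  simp [ofMvPolynomial]

@[simp]
theorem ofMvPolynomial_X_one : ofMvPolynomial k 𝔱 = (2⁻¹ : k) • H k := by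
  simp [ofMvPolynomial]

variable [CharZero k]

theorem ofMvPolynomial_two_mul_X_one : ofMvPolynomial k (2 * 𝔱) = H k := by
  rw [map_mul, map_ofNat, ofMvPolynomial_X_one, ofNat_mul_eq_smul k, smul_smul]
  norm_num

theorem ofMvPolynomial_param : ofMvPolynomial k 𝔞 = F k * E k := by
  simp only [map_sub, map_mul, map_add, ofMvPolynomial_X_zero, ofMvPolynomial_X_one,
    casimir, mul_add, smul_add, smul_mul_assoc, mul_smul_comm, smul_smul, mul_one,
    ofNat_mul_eq_smul k]
  match_scalars <;> norm_num

end Usl2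

variable {σ : MvPolynomial (Fin 2) k ≃ₐ[k] MvPolynomial (Fin 2) k}
  (hc : σ (MvPolynomial.X 0) = MvPolynomial.X 0)
  (ht : σ (MvPolynomial.X 1) = MvPolynomial.X 1 - 1)

namespace GWA
include ht

theorem inclHom_two_mul_X_one_mul_X :
    inclHom σ 𝔞 (2 * 𝔱) * GWA.X k _ σ 𝔞 =
      GWA.X k _ σ 𝔞 * inclHom σ 𝔞 (2 * 𝔱) + 2 * GWA.X k _ σ 𝔞 := by
  have h : σ (2 * 𝔱) = 2 * 𝔱 - 2 := by rw [map_mul, map_ofNat, ht]; ring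
  rw [X_mul_inclHom, h, map_sub, map_ofNat, sub_mul, sub_add_cancel]

theorem inclHom_two_mul_X_one_mul_Y :
    inclHom σ 𝔞 (2 * 𝔱) * GWA.Y k _ σ 𝔞 =
      GWA.Y k _ σ 𝔞 * inclHom σ 𝔞 (2 * 𝔱) - 2 * GWA.Y k _ σ 𝔞 := by
  have h : σ (2 * 𝔱 + 2) = 2 * 𝔱 := by rw [map_add, map_mul, map_ofNat, ht]; ring
  have := Y_mul_inclHom (σ := σ) (a := 𝔞) (2 * 𝔱 + 2)
  rw [h, map_add, map_ofNat, add_mul] at this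
  rw [this, add_sub_cancel_right]

end GWA

include hc ht

theorem sigma_param : σ 𝔞 = 𝔞 + 2 * 𝔱 := by
  rw [map_sub, map_mul, map_add, map_one, hc, ht]
  ring

namespace Usl2
variable [CharZero k]

theorem ofMvPolynomial_sigma_param : ofMvPolynomial k (σ 𝔞) = E k * F k := by
  rw [sigma_param hc ht, map_add, ofMvPolynomial_param, ofMvPolynomial_two_mul_X_one, E_mul_F]

theorem E_mul_ofMvPolynomial (u : MvPolynomial (Fin 2) k) :
    E k * ofMvPolynomial k u = ofMvPolynomial k (σ u) * E k := by
  refine MvPolynomial.mul_algHom_eq_algHom_mul (g := (ofMvPolynomial k).comp σ.toAlgHom)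
    (Fin.forall_fin_two.mpr ⟨?_, ?_⟩) u
  · have hΩ : Commute (E k) (casimir k) := commute_E_casimir H_mul_E E_mul_F
    simpa [hc] using hΩ.eq
  · have hEH : E k * H k = H k * E k - 2 * E k := by rw [H_mul_E]; abel
    simp only [AlgHom.comp_apply, AlgEquiv.toAlgHom_apply, ht, map_sub, map_one,
      ofMvPolynomial_X_one, mul_smul_comm, hEH, sub_mul, smul_mul_assoc, one_mul, smul_sub,
      ofNat_mul_eq_smul k, smul_smul]
    match_scalars <;> norm_num

theorem F_mul_ofMvPolynomial (u : MvPolynomial (Fin 2) k) :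
    F k * ofMvPolynomial k (σ u) = ofMvPolynomial k u * F k := by
  refine MvPolynomial.mul_algHom_eq_algHom_mul (f := (ofMvPolynomial k).comp σ.toAlgHom)
    (Fin.forall_fin_two.mpr ⟨?_, ?_⟩) u
  · have hΩ : Commute (F k) (casimir k) := commute_F_casimir H_mul_F E_mul_F
    simpa [hc] using hΩ.eq
  · have hFH : F k * H k = H k * F k + 2 * F k := by rw [H_mul_F]; abel
    simp only [AlgHom.comp_apply, AlgEquiv.toAlgHom_apply, ht, map_sub, map_one,
      ofMvPolynomial_X_one, mul_sub, mul_smul_comm, hFH, smul_mul_assoc, mul_one, smul_add,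
      ofNat_mul_eq_smul k, smul_smul]
    match_scalars <;> norm_num

end Usl2

namespace GWA

theorem X_mul_Y_eq_Y_mul_X_add :
    GWA.X k _ σ 𝔞 * GWA.Y k _ σ 𝔞 = GWA.Y k _ σ 𝔞 * GWA.X k _ σ 𝔞 + inclHom σ 𝔞 (2 * 𝔱) := by
  rw [X_mul_Y, Y_mul_X, sigma_param hc ht, map_add]

end GWA

def Usl2.toGWA : Usl2 k →ₐ[k] GWA k _ σ 𝔞 :=
  Usl2.lift (GWA.X k _ σ 𝔞) (GWA.Y k _ σ 𝔞) (GWA.inclHom σ 𝔞 (2 * 𝔱))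
    (GWA.inclHom_two_mul_X_one_mul_X ht) (GWA.inclHom_two_mul_X_one_mul_Y ht)
    (GWA.X_mul_Y_eq_Y_mul_X_add hc ht)

theorem Usl2.toGWA_casimir : toGWA hc ht (casimir k) = GWA.inclHom σ 𝔞 (4 * 𝔠) := by
  rw [show (4 : MvPolynomial (Fin 2) k) * 𝔠 = 4 * 𝔞 + 2 * 𝔱 * (2 * 𝔱) + 2 * (2 * 𝔱) by ring]
  simp [toGWA, casimir, mul_assoc, GWA.Y_mul_X, map_ofNat]

variable [CharZero k]

def GWA.toUsl2 : GWA k _ σ 𝔞 →ₐ[k] Usl2 k :=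
  GWA.lift (Usl2.ofMvPolynomial k) (Usl2.E k) (Usl2.F k) Usl2.ofMvPolynomial_param.symm
    (Usl2.ofMvPolynomial_sigma_param hc ht).symm (Usl2.E_mul_ofMvPolynomial hc ht)
    (Usl2.F_mul_ofMvPolynomial hc ht)

theorem GWA.toUsl2_comp_toGWA : (toUsl2 hc ht).comp (Usl2.toGWA hc ht) = AlgHom.id k (Usl2 k) :=
  Usl2.algHom_ext (by simp [toUsl2, Usl2.toGWA]) (by simp [toUsl2, Usl2.toGWA])
    (by simp only [AlgHom.comp_apply, Usl2.toGWA, Usl2.lift_H, toUsl2, lift_inclHom,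
      Usl2.ofMvPolynomial_two_mul_X_one, AlgHom.id_apply])

theorem Usl2.toGWA_comp_toUsl2 : (toGWA hc ht).comp (GWA.toUsl2 hc ht) = AlgHom.id k _ := by
  refine GWA.algHom_ext (MvPolynomial.algHom_ext (Fin.forall_fin_two.mpr ⟨?_, ?_⟩))
    (by simp [toGWA, GWA.toUsl2]) (by simp [toGWA, GWA.toUsl2])
  · simp only [AlgHom.comp_apply, GWA.toUsl2, GWA.lift_inclHom, ofMvPolynomial_X_zero, map_smul,
      toGWA_casimir, AlgHom.id_apply]
    rw [← map_smul, ofNat_mul_eq_smul k, inv_smul_smul₀ (by norm_num : (4 : k) ≠ 0)]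
  · simp only [AlgHom.comp_apply, GWA.toUsl2, GWA.lift_inclHom, ofMvPolynomial_X_one, map_smul,
      toGWA, lift_H, AlgHom.id_apply]
    rw [← map_smul, ofNat_mul_eq_smul k, inv_smul_smul₀ two_ne_zero]

end Sl2Weyl

/-- For `A = k[c,t]`, `a = c - t(t+1)`, and the `k[c]`-algebra automorphism
`σ` with `σ(t) = t - 1`, the generalized Weyl algebra `W_{a,σ}` is isomorphic to `U(sl₂)`
via `H ↦ 2t`, `E ↦ x`, `F ↦ y` (so `c` corresponds to the Casimir element). -/
theorem gwa_equiv_usl2 [CharZero k]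
    (σ : MvPolynomial (Fin 2) k ≃ₐ[k] MvPolynomial (Fin 2) k)
    (hc : σ (MvPolynomial.X 0) = MvPolynomial.X 0)
    (ht : σ (MvPolynomial.X 1) = MvPolynomial.X 1 - 1) :
    ∃ e : Usl2 k ≃ₐ[k]
        GWA k (MvPolynomial (Fin 2) k) σ
          (MvPolynomial.X 0 - MvPolynomial.X 1 * (MvPolynomial.X 1 + 1)),
      e (Usl2.H k) = GWA.incl k (MvPolynomial (Fin 2) k) σ
          (MvPolynomial.X 0 - MvPolynomial.X 1 * (MvPolynomial.X 1 + 1))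
          (2 * MvPolynomial.X 1) ∧
      e (Usl2.E k) = GWA.X k (MvPolynomial (Fin 2) k) σ
          (MvPolynomial.X 0 - MvPolynomial.X 1 * (MvPolynomial.X 1 + 1)) ∧
      e (Usl2.F k) = GWA.Y k (MvPolynomial (Fin 2) k) σ
          (MvPolynomial.X 0 - MvPolynomial.X 1 * (MvPolynomial.X 1 + 1)) := by
  refine ⟨AlgEquiv.ofAlgHom (Usl2.toGWA hc ht) (GWA.toUsl2 hc ht) (Usl2.toGWA_comp_toUsl2 hc ht)
    (GWA.toUsl2_comp_toGWA hc ht), ?_, ?_, ?_⟩ <;>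
  simp [Usl2.toGWA, GWA.inclHom_apply]

end
end

section
/- Fix q ∈ k^× with q² ≠ 1. Let A = k[c, t, t^{-1}], a = c − (q^{-1}t + q t^{-1}), and σ the k[c]-algebra automorphism with σ(t) = q²t. Then the generalized Weyl algebra W_{a,σ} is isomorphic to the quantum enveloping algebra U_q(sl₂) = k⟨K^{±1}, E, F⟩/(KE − q²EK, KF − q^{-2}FK, EF − FE − (K − K^{-1})/(q − q^{-1})), via t ↦ K, c ↦ (q−q^{-1})²Ω, x ↦ (q−q^{-1})F, y ↦ (q−q^{-1})E, where Ω = FE + (qK + q^{-1}K^{-1})/(q−q^{-1})² is the quantum Casimir element. -/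
noncomputable section

open FreeAlgebra

variable (k : Type) [Field k] (A : Type) [Ring A] [Algebra k A]

variable (σ : A ≃ₐ[k] A)

variable (q : k)

/-- Relations of `U_q(sl₂)`: generators `0 = K`, `1 = K⁻¹`, `2 = E`, `3 = F` with
`KK⁻¹ = K⁻¹K = 1`, `KE = q²EK`, `KF = q⁻²FK`, `EF - FE = (K - K⁻¹)/(q - q⁻¹)`. -/
inductive UqRel : FreeAlgebra k (Fin 4) → FreeAlgebra k (Fin 4) → Prop
  | kki : UqRel (ι k (0 : Fin 4) * ι k (1 : Fin 4)) 1
  | kik : UqRel (ι k (1 : Fin 4) * ι k (0 : Fin 4)) 1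
  | ke : UqRel (ι k (0 : Fin 4) * ι k (2 : Fin 4)) (q ^ 2 • (ι k (2 : Fin 4) * ι k (0 : Fin 4)))
  | kf : UqRel (ι k (0 : Fin 4) * ι k (3 : Fin 4)) ((q ^ 2)⁻¹ • (ι k (3 : Fin 4) * ι k (0 : Fin 4)))
  | ef : UqRel (ι k (2 : Fin 4) * ι k (3 : Fin 4))
      (ι k (3 : Fin 4) * ι k (2 : Fin 4) + (q - q⁻¹)⁻¹ • (ι k (0 : Fin 4) - ι k (1 : Fin 4)))

/-- The quantum enveloping algebra `U_q(sl₂)`. -/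
abbrev Uqsl2 : Type := RingQuot (UqRel k q)

/-- The generator `K` of `U_q(sl₂)`. -/
def Uqsl2.K : Uqsl2 k q := RingQuot.mkAlgHom k (UqRel k q) (ι k (0 : Fin 4))
/-- The generator `K⁻¹` of `U_q(sl₂)`. -/
def Uqsl2.Kinv : Uqsl2 k q := RingQuot.mkAlgHom k (UqRel k q) (ι k (1 : Fin 4))
/-- The generator `E` of `U_q(sl₂)`. -/
def Uqsl2.E : Uqsl2 k q := RingQuot.mkAlgHom k (UqRel k q) (ι k (2 : Fin 4))
/-- The generator `F` of `U_q(sl₂)`. -/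
def Uqsl2.F : Uqsl2 k q := RingQuot.mkAlgHom k (UqRel k q) (ι k (3 : Fin 4))

/-- The quantum Casimir element `Ω = EF + (q⁻¹K + qK⁻¹)/(q - q⁻¹)²` of `U_q(sl₂)`. -/
def Uqsl2.Casimir : Uqsl2 k q :=
  Uqsl2.E k q * Uqsl2.F k q +
    ((q - q⁻¹) ^ 2)⁻¹ • (q⁻¹ • Uqsl2.K k q + q • Uqsl2.Kinv k q)

namespace GWAUq

open Uqsl2 LaurentPolynomial

variable {kk : Type} [Field kk] {q : kk}

lemma hqqne (hq0 : q ≠ 0) (hq1 : q ^ 2 ≠ 1) : q - q⁻¹ ≠ 0 := by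
  intro h
  apply hq1
  have h2 : q = q⁻¹ := sub_eq_zero.mp h
  rw [sq]
  nth_rewrite 2 [h2]
  exact mul_inv_cancel₀ hq0

/-! ### Relations in `U_q(sl₂)` -/

lemma K_Kinv : K kk q * Kinv kk q = 1 := by
  have h := RingQuot.mkAlgHom_rel kk (UqRel.kki (k := kk) (q := q))
  rw [map_mul, map_one] at h
  exact h

lemma Kinv_K : Kinv kk q * K kk q = 1 := by
  have h := RingQuot.mkAlgHom_rel kk (UqRel.kik (k := kk) (q := q))
  rw [map_mul, map_one] at h
  exact h

lemma K_E : K kk q * E kk q = q ^ 2 • (E kk q * K kk q) := by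
  have h := RingQuot.mkAlgHom_rel kk (UqRel.ke (k := kk) (q := q))
  rw [map_mul, map_smul, map_mul] at h
  exact h

lemma K_F : K kk q * F kk q = (q ^ 2)⁻¹ • (F kk q * K kk q) := by
  have h := RingQuot.mkAlgHom_rel kk (UqRel.kf (k := kk) (q := q))
  rw [map_mul, map_smul, map_mul] at h
  exact h

lemma E_F : E kk q * F kk q
    = F kk q * E kk q + (q - q⁻¹)⁻¹ • (K kk q - Kinv kk q) := by
  have h := RingQuot.mkAlgHom_rel kk (UqRel.ef (k := kk) (q := q))
  rw [map_mul, map_add, map_smul, map_sub, map_mul] at h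
  exact h

lemma E_Kinv : E kk q * Kinv kk q = q ^ 2 • (Kinv kk q * E kk q) := by
  have h : E kk q * Kinv kk q = Kinv kk q * (K kk q * E kk q) * Kinv kk q := by
    rw [← mul_assoc, Kinv_K, one_mul]
  rw [h, K_E, mul_smul_comm, smul_mul_assoc, mul_assoc, mul_assoc, K_Kinv, mul_one]

lemma Kinv_E (hq0 : q ≠ 0) :
    Kinv kk q * E kk q = (q ^ 2)⁻¹ • (E kk q * Kinv kk q) := by
  rw [E_Kinv, inv_smul_smul₀ (pow_ne_zero 2 hq0)]

lemma F_Kinv : F kk q * Kinv kk q = (q ^ 2)⁻¹ • (Kinv kk q * F kk q) := by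
  have h : F kk q * Kinv kk q = Kinv kk q * (K kk q * F kk q) * Kinv kk q := by
    rw [← mul_assoc, Kinv_K, one_mul]
  rw [h, K_F, mul_smul_comm, smul_mul_assoc, mul_assoc, mul_assoc, K_Kinv, mul_one]

lemma Kinv_F (hq0 : q ≠ 0) :
    Kinv kk q * F kk q = q ^ 2 • (F kk q * Kinv kk q) := by
  rw [F_Kinv, smul_inv_smul₀ (pow_ne_zero 2 hq0)]

/-- `(q-q⁻¹)²` times the Casimir element, in expanded form. -/
def Cas (kk : Type) [Field kk] (q : kk) : Uqsl2 kk q :=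
  (q - q⁻¹) ^ 2 • (E kk q * F kk q) + q⁻¹ • K kk q + q • Kinv kk q

lemma Cas_eq (hq0 : q ≠ 0) (hq1 : q ^ 2 ≠ 1) :
    (q - q⁻¹) ^ 2 • Casimir kk q = Cas kk q := by
  unfold Cas Uqsl2.Casimir
  rw [smul_add, smul_smul, mul_inv_cancel₀ (pow_ne_zero 2 (hqqne hq0 hq1)), one_smul, ← add_assoc]

lemma Cas_K (hq0 : q ≠ 0) : Cas kk q * K kk q = K kk q * Cas kk q := by
  have h1 : K kk q * (E kk q * F kk q) = E kk q * F kk q * K kk q := by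
    rw [← mul_assoc, K_E, smul_mul_assoc, mul_assoc, K_F, mul_smul_comm, smul_smul,
      mul_inv_cancel₀ (pow_ne_zero 2 hq0), one_smul, mul_assoc]
  unfold Cas
  rw [add_mul, add_mul, mul_add, mul_add, smul_mul_assoc, smul_mul_assoc, smul_mul_assoc,
    mul_smul_comm, mul_smul_comm, mul_smul_comm, h1, Kinv_K, K_Kinv]

lemma Cas_Kinv (hq0 : q ≠ 0) : Cas kk q * Kinv kk q = Kinv kk q * Cas kk q := by
  have h1 : Kinv kk q * (E kk q * F kk q) = E kk q * F kk q * Kinv kk q := by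
    rw [← mul_assoc, Kinv_E hq0, smul_mul_assoc, mul_assoc, Kinv_F hq0, mul_smul_comm,
      smul_smul, inv_mul_cancel₀ (pow_ne_zero 2 hq0), one_smul, mul_assoc]
  unfold Cas
  rw [add_mul, add_mul, mul_add, mul_add, smul_mul_assoc, smul_mul_assoc, smul_mul_assoc,
    mul_smul_comm, mul_smul_comm, mul_smul_comm, h1, Kinv_K, K_Kinv]

lemma ne_q2 (hq0 : q ≠ 0) (hq1 : q ^ 2 ≠ 1) : q ^ 2 - 1 ≠ 0 := sub_ne_zero.mpr hq1

lemma ne_aux1 (hq0 : q ≠ 0) (hq1 : q ^ 2 ≠ 1) : -q ^ 2 + q ^ 4 ≠ 0 := by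
  intro h
  apply ne_q2 hq0 hq1
  have h5 : q ^ 2 * (q ^ 2 - 1) = 0 := by linear_combination h
  rcases mul_eq_zero.mp h5 with h6 | h6
  · exact absurd (pow_eq_zero_iff (by norm_num) |>.mp h6) hq0
  · exact h6

lemma ne_aux2 (hq0 : q ≠ 0) (hq1 : q ^ 2 ≠ 1) : -q ^ 4 + q ^ 6 ≠ 0 := by
  intro h
  apply ne_q2 hq0 hq1
  have h5 : q ^ 4 * (q ^ 2 - 1) = 0 := by linear_combination h
  rcases mul_eq_zero.mp h5 with h6 | h6
  · exact absurd (pow_eq_zero_iff (by norm_num) |>.mp h6) hq0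
  · exact h6

lemma ne_aux3 (hq0 : q ≠ 0) (hq1 : q ^ 2 ≠ 1) : q ^ 2 - q ^ 4 * 2 + q ^ 6 ≠ 0 := by
  intro h
  have h5 : q ^ 2 * (q ^ 2 - 1) ^ 2 = 0 := by linear_combination h
  rcases mul_eq_zero.mp h5 with h6 | h6
  · exact absurd (pow_eq_zero_iff (by norm_num) |>.mp h6) hq0
  · exact ne_q2 hq0 hq1 (pow_eq_zero_iff (by norm_num) |>.mp h6)

lemma ne_aux4 (hq0 : q ≠ 0) (hq1 : q ^ 2 ≠ 1) : -1 + q ^ 2 ≠ 0 := by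
  intro h
  exact ne_q2 hq0 hq1 (by linear_combination h)

lemma ne_aux5 (hq0 : q ≠ 0) (hq1 : q ^ 2 ≠ 1) : 1 - q ^ 2 * 2 + q ^ 4 ≠ 0 := by
  intro h
  have h5 : (q ^ 2 - 1) ^ 2 = 0 := by linear_combination h
  exact ne_q2 hq0 hq1 (pow_eq_zero_iff (by norm_num) |>.mp h5)

lemma ne_aux6 (hq0 : q ≠ 0) (hq1 : q ^ 2 ≠ 1) : q - q ^ 3 * 2 + q ^ 5 ≠ 0 := by
  intro h
  have h5 : q * (q ^ 2 - 1) ^ 2 = 0 := by linear_combination h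
  rcases mul_eq_zero.mp h5 with h6 | h6
  · exact hq0 h6
  · exact ne_q2 hq0 hq1 (pow_eq_zero_iff (by norm_num) |>.mp h6)

lemma F_E : F kk q * E kk q
    = E kk q * F kk q - (q - q⁻¹)⁻¹ • (K kk q - Kinv kk q) := by
  rw [E_F]; module

lemma Cas_E (hq0 : q ≠ 0) (hq1 : q ^ 2 ≠ 1) :
    Cas kk q * E kk q = E kk q * Cas kk q := by
  have h1 : E kk q * F kk q * E kk q
      = E kk q * (E kk q * F kk q) - (q - q⁻¹)⁻¹ • (E kk q * (K kk q - Kinv kk q)) := by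
    rw [mul_assoc, F_E, mul_sub, mul_smul_comm]
  unfold Cas
  rw [add_mul, add_mul, mul_add, mul_add, smul_mul_assoc, smul_mul_assoc, smul_mul_assoc,
    mul_smul_comm, mul_smul_comm, mul_smul_comm, h1, K_E, Kinv_E hq0, mul_sub]
  have h2 : q - q⁻¹ ≠ 0 := hqqne hq0 hq1
  have h3 := ne_q2 hq0 hq1
  have h4 := ne_aux1 hq0 hq1
  have h5 := ne_aux2 hq0 hq1
  have h6 := ne_aux3 hq0 hq1
  have h7 := ne_aux4 hq0 hq1
  have h8 := ne_aux5 hq0 hq1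
  have h9 := ne_aux6 hq0 hq1
  have h3 := ne_q2 hq0 hq1
  have h4 := ne_aux1 hq0 hq1
  have h5 := ne_aux2 hq0 hq1
  have h6 := ne_aux3 hq0 hq1
  have h7 := ne_aux4 hq0 hq1
  have h8 := ne_aux5 hq0 hq1
  have h9 := ne_aux6 hq0 hq1
  match_scalars <;> (field_simp; try ring; try field_simp; try ring)

lemma Cas_F (hq0 : q ≠ 0) (hq1 : q ^ 2 ≠ 1) :
    Cas kk q * F kk q = F kk q * Cas kk q := by
  have h1 : E kk q * F kk q * F kk q
      = F kk q * (E kk q * F kk q) + (q - q⁻¹)⁻¹ • ((K kk q - Kinv kk q) * F kk q) := by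
    nth_rewrite 1 [E_F]
    rw [add_mul, smul_mul_assoc, mul_assoc]
  unfold Cas
  rw [add_mul, add_mul, mul_add, mul_add, smul_mul_assoc, smul_mul_assoc, smul_mul_assoc,
    mul_smul_comm, mul_smul_comm, mul_smul_comm, h1, sub_mul, K_F, Kinv_F hq0]
  have h2 : q - q⁻¹ ≠ 0 := hqqne hq0 hq1
  have h3 := ne_q2 hq0 hq1
  have h4 := ne_aux1 hq0 hq1
  have h5 := ne_aux2 hq0 hq1
  have h6 := ne_aux3 hq0 hq1
  have h7 := ne_aux4 hq0 hq1
  have h8 := ne_aux5 hq0 hq1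
  have h9 := ne_aux6 hq0 hq1
  have h3 := ne_q2 hq0 hq1
  have h4 := ne_aux1 hq0 hq1
  have h5 := ne_aux2 hq0 hq1
  have h6 := ne_aux3 hq0 hq1
  have h7 := ne_aux4 hq0 hq1
  have h8 := ne_aux5 hq0 hq1
  have h9 := ne_aux6 hq0 hq1
  match_scalars <;> (field_simp; try ring; try field_simp; try ring)

/-! ### The map `θ : A → U_q(sl₂)` -/

/-- `K` as a unit of `U_q(sl₂)`. -/
def KU (kk : Type) [Field kk] (q : kk) : (Uqsl2 kk q)ˣ :=
  ⟨K kk q, Kinv kk q, K_Kinv, Kinv_K⟩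

lemma commute_aeval {B : Type*} [Ring B] [Algebra kk B] {x y : B} (h : Commute y x)
    (p : Polynomial kk) : Commute y (Polynomial.aeval x p) := by
  induction p using Polynomial.induction_on with
  | C c => simpa using Algebra.commute_algebraMap_right c y
  | add p r hp hr => rw [map_add]; exact hp.add_right hr
  | monomial n c ih =>
      rw [map_mul, map_pow, Polynomial.aeval_X, Polynomial.aeval_C]
      exact (Algebra.commute_algebraMap_right c y).mul_right (h.pow_right _)

lemma commute_Cas_KU_zpow (hq0 : q ≠ 0) (n : ℤ) :
    Commute (Cas kk q) ((KU kk q ^ n : (Uqsl2 kk q)ˣ) : Uqsl2 kk q) := by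
  have h : Commute (Cas kk q) ((KU kk q : (Uqsl2 kk q)ˣ) : Uqsl2 kk q) := Cas_K hq0
  exact h.units_zpow_right n

/-- The algebra map `k[c][t,t⁻¹] → U_q(sl₂)`, `c ↦ (q-q⁻¹)²Ω`, `t ↦ K`. -/
def theta (hq0 : q ≠ 0) : LaurentPolynomial (Polynomial kk) →ₐ[kk] Uqsl2 kk q :=
  AddMonoidAlgebra.liftNCAlgHom (Polynomial.aeval (Cas kk q))
    ((Units.coeHom _).comp (zpowersHom _ (KU kk q)))
    (fun p n => (commute_aeval ((commute_Cas_KU_zpow hq0 _).symm) p).symm)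

lemma theta_single (hq0 : q ≠ 0) (n : ℤ) (p : Polynomial kk) :
    theta hq0 (AddMonoidAlgebra.single n p)
      = Polynomial.aeval (Cas kk q) p * ((KU kk q ^ n : (Uqsl2 kk q)ˣ) : Uqsl2 kk q) := by
  simp only [theta, AddMonoidAlgebra.liftNCAlgHom, AddMonoidAlgebra.liftNCRingHom,
    RingHom.coe_mk, MonoidHom.coe_mk, OneHom.coe_mk, AlgHom.coe_mk,
    AddMonoidHom.toFun_eq_coe]
  erw [AddMonoidAlgebra.liftNC_single]
  simp

lemma theta_T (hq0 : q ≠ 0) (n : ℤ) :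
    theta (kk := kk) hq0 (T n) = ((KU kk q ^ n : (Uqsl2 kk q)ˣ) : Uqsl2 kk q) := by
  have h : (T n : LaurentPolynomial (Polynomial kk)) = AddMonoidAlgebra.single n 1 := rfl
  rw [h, theta_single, map_one, one_mul]

lemma theta_T1 (hq0 : q ≠ 0) : theta (kk := kk) hq0 (T 1) = K kk q := by
  rw [theta_T, zpow_one]; rfl

lemma theta_Tneg1 (hq0 : q ≠ 0) : theta (kk := kk) hq0 (T (-1)) = Kinv kk q := by
  rw [theta_T, zpow_neg_one]; rfl

lemma theta_C (hq0 : q ≠ 0) (p : Polynomial kk) :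
    theta hq0 (C p) = Polynomial.aeval (Cas kk q) p := by
  have h : (C p : LaurentPolynomial (Polynomial kk)) = AddMonoidAlgebra.single 0 p := rfl
  rw [h, theta_single, zpow_zero, Units.val_one, mul_one]

lemma theta_CX (hq0 : q ≠ 0) :
    theta (kk := kk) hq0 (C Polynomial.X) = Cas kk q := by
  rw [theta_C, Polynomial.aeval_X]

/-- The element `a = c - (q⁻¹ t + q t⁻¹)`. -/
abbrev el (kk : Type) [Field kk] (q : kk) : LaurentPolynomial (Polynomial kk) :=
  C Polynomial.X - (q⁻¹ • T 1 + q • T (-1))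

lemma theta_el (hq0 : q ≠ 0) :
    theta (kk := kk) hq0 (el kk q) = (q - q⁻¹) ^ 2 • (E kk q * F kk q) := by
  unfold el
  rw [map_sub, map_add, map_smul, map_smul, theta_CX, theta_T1, theta_Tneg1]
  unfold Cas
  module

/-! ### Generation of the Laurent polynomial ring -/

lemma laurent_gen (P : LaurentPolynomial (Polynomial kk) → Prop)
    (hadd : ∀ u v, P u → P v → P (u + v))
    (hmul : ∀ u v, P u → P v → P (u * v))
    (halg : ∀ c : kk, P (algebraMap kk _ c))
    (hX : P (C Polynomial.X))
    (hT : P (T 1)) (hTi : P (T (-1))) : ∀ u, P u := by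
  have h1 : P 1 := by simpa using halg 1
  have hTn : ∀ n : ℤ, P (T n) := by
    intro n
    induction n using Int.induction_on with
    | zero => simpa [T_zero] using h1
    | succ n ih => rw [T_add]; exact hmul _ _ ih hT
    | pred n ih => rw [show (-(n : ℤ) - 1) = -n + (-1) by ring, T_add]; exact hmul _ _ ih hTi
  have hC : ∀ p : Polynomial kk, P (C p) := by
    intro p
    induction p using Polynomial.induction_on with
    | C c => simpa [LaurentPolynomial.algebraMap_apply] using halg c
    | add p r hp hr => rw [map_add]; exact hadd _ _ hp hr
    | monomial n c ih => rw [pow_succ, ← mul_assoc, map_mul]; exact hmul _ _ ih hX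
  intro u
  induction u using LaurentPolynomial.induction_on' with
  | add p r hp hr => exact hadd _ _ hp hr
  | C_mul_T n a => exact hmul _ _ (hC a) (hTn n)

/-! ### The GWA side -/

variable (s : LaurentPolynomial (Polynomial kk) ≃ₐ[kk] LaurentPolynomial (Polynomial kk))

/-- The inclusion of `A` into the GWA, as an algebra hom. -/
def inclHom : LaurentPolynomial (Polynomial kk) →ₐ[kk]
    GWA kk (LaurentPolynomial (Polynomial kk)) s (el kk q) where
  toFun u := GWA.incl kk _ s (el kk q) u
  map_one' := by
    have h := RingQuot.mkAlgHom_rel kk (Wrel.alg (k := kk) (σ := s) (a := el kk q) 1)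
    simpa [GWA.incl] using h
  map_mul' u v := by
    have h := RingQuot.mkAlgHom_rel kk (Wrel.mul (k := kk) (σ := s) (a := el kk q) u v)
    rw [map_mul] at h
    exact h
  map_zero' := by
    have h := RingQuot.mkAlgHom_rel kk (Wrel.alg (k := kk) (σ := s) (a := el kk q) 0)
    simpa [GWA.incl] using h
  map_add' u v := by
    have h := RingQuot.mkAlgHom_rel kk (Wrel.add (k := kk) (σ := s) (a := el kk q) u v)
    rw [map_add] at h
    exact h
  commutes' c := by
    have h := RingQuot.mkAlgHom_rel kk (Wrel.alg (k := kk) (σ := s) (a := el kk q) c)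
    simpa [GWA.incl] using h

lemma inclHom_apply (u : LaurentPolynomial (Polynomial kk)) :
    inclHom (q := q) s u = GWA.incl kk _ s (el kk q) u := rfl

lemma gYX : GWA.Y kk _ s (el kk q) * GWA.X kk _ s (el kk q) = inclHom (q := q) s (el kk q) := by
  have h := RingQuot.mkAlgHom_rel kk (Wrel.yx (k := kk) (σ := s) (a := el kk q))
  rw [map_mul] at h
  exact h

lemma gXY : GWA.X kk _ s (el kk q) * GWA.Y kk _ s (el kk q)
    = inclHom (q := q) s (s (el kk q)) := by
  have h := RingQuot.mkAlgHom_rel kk (Wrel.xy (k := kk) (σ := s) (a := el kk q))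
  rw [map_mul] at h
  exact h

lemma gXu (u : LaurentPolynomial (Polynomial kk)) :
    GWA.X kk _ s (el kk q) * inclHom (q := q) s u
      = inclHom (q := q) s (s u) * GWA.X kk _ s (el kk q) := by
  have h := RingQuot.mkAlgHom_rel kk (Wrel.xu (k := kk) (σ := s) (a := el kk q) u)
  rw [map_mul, map_mul] at h
  exact h

lemma gYu (u : LaurentPolynomial (Polynomial kk)) :
    GWA.Y kk _ s (el kk q) * inclHom (q := q) s (s u)
      = inclHom (q := q) s u * GWA.Y kk _ s (el kk q) := by
  have h := RingQuot.mkAlgHom_rel kk (Wrel.yu (k := kk) (σ := s) (a := el kk q) u)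
  rw [map_mul, map_mul] at h
  exact h

/-! ### Facts about `σ` -/

lemma sigma_Tneg (hq0 : q ≠ 0) (ht : s (T 1) = q ^ 2 • T 1) :
    s (T (-1)) = (q ^ 2)⁻¹ • T (-1) := by
  have h1 : s (T 1) * s (T (-1)) = 1 := by
    rw [← map_mul, ← T_add, show (1 : ℤ) + -1 = 0 from by norm_num, T_zero, map_one]
  have h2 : ((q ^ 2)⁻¹ • (T (-1) : LaurentPolynomial (Polynomial kk))) * s (T 1) = 1 := by
    rw [ht, smul_mul_assoc, mul_smul_comm, smul_smul, inv_mul_cancel₀ (pow_ne_zero 2 hq0),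
      one_smul, ← T_add, show (-1 : ℤ) + 1 = 0 from by norm_num, T_zero]
  have h3 := congrArg (· * s (T (-1))) h2
  simp only [one_mul] at h3
  rw [mul_assoc, h1, mul_one] at h3
  exact h3.symm

lemma sigma_el (hq0 : q ≠ 0)
    (hc : s (C Polynomial.X) = C Polynomial.X) (ht : s (T 1) = q ^ 2 • T 1) :
    s (el kk q) = C Polynomial.X - (q • T 1 + q⁻¹ • T (-1)) := by
  unfold el
  rw [map_sub, map_add, map_smul, map_smul, hc, ht, sigma_Tneg s hq0 ht, smul_smul, smul_smul]
  have e1 : q⁻¹ * q ^ 2 = q := by field_simp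
  have e2 : q * (q ^ 2)⁻¹ = q⁻¹ := by field_simp
  rw [e1, e2]

/-! ### The map `Φ` -/

/-- Generator images for `Φ : W → U_q(sl₂)`. -/
def phiGen (hq0 : q ≠ 0) : Wgen (LaurentPolynomial (Polynomial kk)) → Uqsl2 kk q
  | .incl u => theta hq0 u
  | .x => (q - q⁻¹) • F kk q
  | .y => (q - q⁻¹) • E kk q

lemma F_theta (hq0 : q ≠ 0) (hq1 : q ^ 2 ≠ 1)
    (hc : s (C Polynomial.X) = C Polynomial.X) (ht : s (T 1) = q ^ 2 • T 1) :
    ∀ u, F kk q * theta hq0 u = theta hq0 (s u) * F kk q := by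
  apply laurent_gen
  · intro u v hu hv
    simp only [map_add, mul_add, add_mul, hu, hv]
  · intro u v hu hv
    simp only [map_mul]
    rw [← mul_assoc, hu, mul_assoc, hv, ← mul_assoc]
  · intro c
    simp only [AlgEquiv.commutes, AlgHom.commutes]
    exact Algebra.commute_algebraMap_right c _
  · rw [hc, theta_CX]
    exact (Cas_F hq0 hq1).symm
  · rw [theta_T1, ht, map_smul, theta_T1, smul_mul_assoc, K_F,
      smul_inv_smul₀ (pow_ne_zero 2 hq0)]
  · rw [theta_Tneg1, sigma_Tneg s hq0 ht, map_smul, theta_Tneg1, smul_mul_assoc,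
      Kinv_F hq0, inv_smul_smul₀ (pow_ne_zero 2 hq0)]

lemma E_theta (hq0 : q ≠ 0) (hq1 : q ^ 2 ≠ 1)
    (hc : s (C Polynomial.X) = C Polynomial.X) (ht : s (T 1) = q ^ 2 • T 1) :
    ∀ u, E kk q * theta hq0 (s u) = theta hq0 u * E kk q := by
  apply laurent_gen
  · intro u v hu hv
    simp only [map_add, mul_add, add_mul, hu, hv]
  · intro u v hu hv
    simp only [map_mul]
    rw [← mul_assoc, hu, mul_assoc, hv, ← mul_assoc]
  · intro c
    simp only [AlgEquiv.commutes, AlgHom.commutes]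
    exact Algebra.commute_algebraMap_right c _
  · rw [hc, theta_CX]
    exact (Cas_E hq0 hq1).symm
  · rw [ht, map_smul, theta_T1, mul_smul_comm, K_E]
  · rw [sigma_Tneg s hq0 ht, map_smul, theta_Tneg1, mul_smul_comm, Kinv_E hq0]

/-- The map `Φ : W → U_q(sl₂)`. -/
def Phi (hq0 : q ≠ 0) (hq1 : q ^ 2 ≠ 1)
    (hc : s (C Polynomial.X) = C Polynomial.X) (ht : s (T 1) = q ^ 2 • T 1) :
    GWA kk (LaurentPolynomial (Polynomial kk)) s (el kk q) →ₐ[kk] Uqsl2 kk q :=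
  RingQuot.liftAlgHom kk ⟨FreeAlgebra.lift kk (phiGen hq0), by
    intro x y h
    induction h with
    | add u v => simp only [map_add, FreeAlgebra.lift_ι_apply, phiGen]
    | mul u v => simp only [map_mul, FreeAlgebra.lift_ι_apply, phiGen]
    | alg c => simp only [FreeAlgebra.lift_ι_apply, phiGen, AlgHom.commutes]
    | yx =>
        simp only [map_mul, FreeAlgebra.lift_ι_apply, phiGen]
        rw [smul_mul_assoc, mul_smul_comm, smul_smul, ← sq, theta_el hq0]
    | xy =>
        simp only [map_mul, FreeAlgebra.lift_ι_apply, phiGen]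
        rw [smul_mul_assoc, mul_smul_comm, smul_smul, ← sq,
          sigma_el s hq0 hc ht, map_sub, map_add, map_smul, map_smul,
          theta_CX, theta_T1, theta_Tneg1, F_E]
        unfold Cas
        have h2 : q - q⁻¹ ≠ 0 := hqqne hq0 hq1
        have h3 := ne_q2 hq0 hq1
        have h4 := ne_aux1 hq0 hq1
        have h5 := ne_aux2 hq0 hq1
        have h6 := ne_aux3 hq0 hq1
        have h7 := ne_aux4 hq0 hq1
        have h8 := ne_aux5 hq0 hq1
        have h9 := ne_aux6 hq0 hq1
        have h3 := ne_q2 hq0 hq1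
        have h4 := ne_aux1 hq0 hq1
        have h5 := ne_aux2 hq0 hq1
        have h6 := ne_aux3 hq0 hq1
        have h7 := ne_aux4 hq0 hq1
        have h8 := ne_aux5 hq0 hq1
        have h9 := ne_aux6 hq0 hq1
        match_scalars <;> (field_simp; try ring; try field_simp; try ring)
    | xu u =>
        simp only [map_mul, FreeAlgebra.lift_ι_apply, phiGen]
        rw [smul_mul_assoc, mul_smul_comm, F_theta s hq0 hq1 hc ht u]
    | yu u =>
        simp only [map_mul, FreeAlgebra.lift_ι_apply, phiGen]
        rw [smul_mul_assoc, mul_smul_comm, E_theta s hq0 hq1 hc ht u]⟩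

lemma Phi_mk (hq0 : q ≠ 0) (hq1 : q ^ 2 ≠ 1)
    (hc : s (C Polynomial.X) = C Polynomial.X) (ht : s (T 1) = q ^ 2 • T 1)
    (x : FreeAlgebra kk (Wgen (LaurentPolynomial (Polynomial kk)))) :
    Phi s hq0 hq1 hc ht (RingQuot.mkAlgHom kk _ x) = FreeAlgebra.lift kk (phiGen hq0) x :=
  RingQuot.liftAlgHom_mkAlgHom_apply _ _ _ _

lemma Phi_incl (hq0 : q ≠ 0) (hq1 : q ^ 2 ≠ 1)
    (hc : s (C Polynomial.X) = C Polynomial.X) (ht : s (T 1) = q ^ 2 • T 1)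
    (u : LaurentPolynomial (Polynomial kk)) :
    Phi s hq0 hq1 hc ht (GWA.incl kk _ s (el kk q) u) = theta hq0 u := by
  have h := Phi_mk s hq0 hq1 hc ht (ι kk (Wgen.incl u))
  rw [FreeAlgebra.lift_ι_apply] at h
  exact h

lemma Phi_X (hq0 : q ≠ 0) (hq1 : q ^ 2 ≠ 1)
    (hc : s (C Polynomial.X) = C Polynomial.X) (ht : s (T 1) = q ^ 2 • T 1) :
    Phi s hq0 hq1 hc ht (GWA.X kk _ s (el kk q)) = (q - q⁻¹) • F kk q := by
  have h := Phi_mk s hq0 hq1 hc ht (ι kk Wgen.x)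
  rw [FreeAlgebra.lift_ι_apply] at h
  exact h

lemma Phi_Y (hq0 : q ≠ 0) (hq1 : q ^ 2 ≠ 1)
    (hc : s (C Polynomial.X) = C Polynomial.X) (ht : s (T 1) = q ^ 2 • T 1) :
    Phi s hq0 hq1 hc ht (GWA.Y kk _ s (el kk q)) = (q - q⁻¹) • E kk q := by
  have h := Phi_mk s hq0 hq1 hc ht (ι kk Wgen.y)
  rw [FreeAlgebra.lift_ι_apply] at h
  exact h

/-! ### The map `Ψ` -/

/-- Generator images for `Ψ : U_q(sl₂) → W`. -/
def psiGen : Fin 4 → GWA kk (LaurentPolynomial (Polynomial kk)) s (el kk q)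
  | 0 => inclHom (q := q) s (T 1)
  | 1 => inclHom (q := q) s (T (-1))
  | 2 => (q - q⁻¹)⁻¹ • GWA.Y kk _ s (el kk q)
  | 3 => (q - q⁻¹)⁻¹ • GWA.X kk _ s (el kk q)

/-- The map `Ψ : U_q(sl₂) → W`. -/
def Psi (hq0 : q ≠ 0) (hq1 : q ^ 2 ≠ 1)
    (hc : s (C Polynomial.X) = C Polynomial.X) (ht : s (T 1) = q ^ 2 • T 1) :
    Uqsl2 kk q →ₐ[kk] GWA kk (LaurentPolynomial (Polynomial kk)) s (el kk q) :=
  RingQuot.liftAlgHom kk ⟨FreeAlgebra.lift kk (psiGen s), by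
    intro x y h
    induction h with
    | kki =>
        simp only [map_mul, map_one, FreeAlgebra.lift_ι_apply, psiGen]
        rw [← map_mul, ← T_add, show (1 : ℤ) + -1 = 0 from by norm_num, T_zero, map_one]
    | kik =>
        simp only [map_mul, map_one, FreeAlgebra.lift_ι_apply, psiGen]
        rw [← map_mul, ← T_add, show (-1 : ℤ) + 1 = 0 from by norm_num, T_zero, map_one]
    | ke =>
        simp only [map_mul, map_smul, FreeAlgebra.lift_ι_apply, psiGen]
        have h := gYu (q := q) s (T 1)
        rw [ht, map_smul, mul_smul_comm] at h
        rw [mul_smul_comm, ← h, smul_mul_assoc, smul_smul, smul_smul,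
          mul_comm ((q - q⁻¹)⁻¹) (q ^ 2)]
    | kf =>
        simp only [map_mul, map_smul, FreeAlgebra.lift_ι_apply, psiGen]
        have h := gXu (q := q) s (T 1)
        rw [ht, map_smul, smul_mul_assoc] at h
        have key : inclHom (q := q) s (T 1) * GWA.X kk _ s (el kk q)
            = (q ^ 2)⁻¹ • (GWA.X kk _ s (el kk q) * inclHom (q := q) s (T 1)) := by
          rw [h, inv_smul_smul₀ (pow_ne_zero 2 hq0)]
        rw [mul_smul_comm, key, smul_mul_assoc, smul_smul, smul_smul,
          mul_comm ((q - q⁻¹)⁻¹) ((q ^ 2)⁻¹)]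
    | ef =>
        simp only [map_mul, map_add, map_smul, map_sub, FreeAlgebra.lift_ι_apply, psiGen]
        rw [smul_mul_assoc, mul_smul_comm, smul_smul, gYX,
          smul_mul_assoc, mul_smul_comm, smul_smul, gXY,
          sigma_el s hq0 hc ht]
        have hel : inclHom (q := q) s (el kk q)
            = inclHom (q := q) s (C Polynomial.X)
              - (q⁻¹ • inclHom (q := q) s (T 1) + q • inclHom (q := q) s (T (-1))) := by
          rw [← map_smul, ← map_smul, ← map_add, ← map_sub]
        rw [hel]
        simp only [map_sub, map_add, map_smul]
        have h2 : q - q⁻¹ ≠ 0 := hqqne hq0 hq1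
        have h3 := ne_q2 hq0 hq1
        have h4 := ne_aux1 hq0 hq1
        have h5 := ne_aux2 hq0 hq1
        have h6 := ne_aux3 hq0 hq1
        have h7 := ne_aux4 hq0 hq1
        have h8 := ne_aux5 hq0 hq1
        have h9 := ne_aux6 hq0 hq1
        match_scalars <;> (field_simp; try ring; try field_simp; try ring)⟩

lemma Psi_mk (hq0 : q ≠ 0) (hq1 : q ^ 2 ≠ 1)
    (hc : s (C Polynomial.X) = C Polynomial.X) (ht : s (T 1) = q ^ 2 • T 1)
    (x : FreeAlgebra kk (Fin 4)) :
    Psi s hq0 hq1 hc ht (RingQuot.mkAlgHom kk _ x) = FreeAlgebra.lift kk (psiGen s) x :=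
  RingQuot.liftAlgHom_mkAlgHom_apply _ _ _ _

lemma Psi_K (hq0 : q ≠ 0) (hq1 : q ^ 2 ≠ 1)
    (hc : s (C Polynomial.X) = C Polynomial.X) (ht : s (T 1) = q ^ 2 • T 1) :
    Psi s hq0 hq1 hc ht (K kk q) = inclHom (q := q) s (T 1) := by
  have h := Psi_mk s hq0 hq1 hc ht (ι kk (0 : Fin 4))
  rw [FreeAlgebra.lift_ι_apply] at h
  exact h

lemma Psi_Kinv (hq0 : q ≠ 0) (hq1 : q ^ 2 ≠ 1)
    (hc : s (C Polynomial.X) = C Polynomial.X) (ht : s (T 1) = q ^ 2 • T 1) :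
    Psi s hq0 hq1 hc ht (Kinv kk q) = inclHom (q := q) s (T (-1)) := by
  have h := Psi_mk s hq0 hq1 hc ht (ι kk (1 : Fin 4))
  rw [FreeAlgebra.lift_ι_apply] at h
  exact h

lemma Psi_E (hq0 : q ≠ 0) (hq1 : q ^ 2 ≠ 1)
    (hc : s (C Polynomial.X) = C Polynomial.X) (ht : s (T 1) = q ^ 2 • T 1) :
    Psi s hq0 hq1 hc ht (E kk q) = (q - q⁻¹)⁻¹ • GWA.Y kk _ s (el kk q) := by
  have h := Psi_mk s hq0 hq1 hc ht (ι kk (2 : Fin 4))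
  rw [FreeAlgebra.lift_ι_apply] at h
  exact h

lemma Psi_F (hq0 : q ≠ 0) (hq1 : q ^ 2 ≠ 1)
    (hc : s (C Polynomial.X) = C Polynomial.X) (ht : s (T 1) = q ^ 2 • T 1) :
    Psi s hq0 hq1 hc ht (F kk q) = (q - q⁻¹)⁻¹ • GWA.X kk _ s (el kk q) := by
  have h := Psi_mk s hq0 hq1 hc ht (ι kk (3 : Fin 4))
  rw [FreeAlgebra.lift_ι_apply] at h
  exact h

lemma Psi_theta (hq0 : q ≠ 0) (hq1 : q ^ 2 ≠ 1)
    (hc : s (C Polynomial.X) = C Polynomial.X) (ht : s (T 1) = q ^ 2 • T 1) :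
    ∀ u, Psi s hq0 hq1 hc ht (theta hq0 u) = inclHom (q := q) s u := by
  apply laurent_gen
  · intro u v hu hv
    simp only [map_add, hu, hv]
  · intro u v hu hv
    simp only [map_mul, hu, hv]
  · intro c
    simp only [AlgHom.commutes]
  · rw [theta_CX]
    unfold Cas
    rw [map_add, map_add, map_smul, map_smul, map_smul, map_mul,
      Psi_E s hq0 hq1 hc ht, Psi_F s hq0 hq1 hc ht,
      smul_mul_assoc, mul_smul_comm, smul_smul, gYX,
      Psi_K s hq0 hq1 hc ht, Psi_Kinv s hq0 hq1 hc ht,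
      show (C Polynomial.X : LaurentPolynomial (Polynomial kk))
        = el kk q + (q⁻¹ • T 1 + q • T (-1)) from by unfold el; ring,
      map_add, map_add, map_smul, map_smul]
    have h2 : q - q⁻¹ ≠ 0 := hqqne hq0 hq1
    have h3 := ne_q2 hq0 hq1
    have h4 := ne_aux1 hq0 hq1
    have h5 := ne_aux2 hq0 hq1
    have h6 := ne_aux3 hq0 hq1
    have h7 := ne_aux4 hq0 hq1
    have h8 := ne_aux5 hq0 hq1
    have h9 := ne_aux6 hq0 hq1
    match_scalars <;> (field_simp; try ring; try field_simp; try ring)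
  · rw [theta_T1, Psi_K s hq0 hq1 hc ht]
  · rw [theta_Tneg1, Psi_Kinv s hq0 hq1 hc ht]

/-! ### The equivalence -/

/-- The isomorphism `W ≃ U_q(sl₂)`. -/
def equiv (hq0 : q ≠ 0) (hq1 : q ^ 2 ≠ 1)
    (hc : s (C Polynomial.X) = C Polynomial.X) (ht : s (T 1) = q ^ 2 • T 1) :
    GWA kk (LaurentPolynomial (Polynomial kk)) s (el kk q) ≃ₐ[kk] Uqsl2 kk q := by
  refine AlgEquiv.ofAlgHom (Phi s hq0 hq1 hc ht) (Psi s hq0 hq1 hc ht) ?_ ?_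
  · apply RingQuot.ringQuot_ext'
    apply FreeAlgebra.hom_ext
    funext i
    fin_cases i
    · simp only [Function.comp_apply, AlgHom.coe_comp, AlgHom.coe_id, id_eq]
      show Phi s hq0 hq1 hc ht (Psi s hq0 hq1 hc ht (K kk q)) = K kk q
      rw [Psi_K s hq0 hq1 hc ht, inclHom_apply, Phi_incl s hq0 hq1 hc ht, theta_T1]
    · simp only [Function.comp_apply, AlgHom.coe_comp, AlgHom.coe_id, id_eq]
      show Phi s hq0 hq1 hc ht (Psi s hq0 hq1 hc ht (Kinv kk q)) = Kinv kk q
      rw [Psi_Kinv s hq0 hq1 hc ht, inclHom_apply, Phi_incl s hq0 hq1 hc ht, theta_Tneg1]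
    · simp only [Function.comp_apply, AlgHom.coe_comp, AlgHom.coe_id, id_eq]
      show Phi s hq0 hq1 hc ht (Psi s hq0 hq1 hc ht (E kk q)) = E kk q
      rw [Psi_E s hq0 hq1 hc ht, map_smul, Phi_Y s hq0 hq1 hc ht, smul_smul,
        inv_mul_cancel₀ (hqqne hq0 hq1), one_smul]
    · simp only [Function.comp_apply, AlgHom.coe_comp, AlgHom.coe_id, id_eq]
      show Phi s hq0 hq1 hc ht (Psi s hq0 hq1 hc ht (F kk q)) = F kk q
      rw [Psi_F s hq0 hq1 hc ht, map_smul, Phi_X s hq0 hq1 hc ht, smul_smul,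
        inv_mul_cancel₀ (hqqne hq0 hq1), one_smul]
  · apply RingQuot.ringQuot_ext'
    apply FreeAlgebra.hom_ext
    funext g
    cases g with
    | incl u =>
        simp only [Function.comp_apply, AlgHom.coe_comp, AlgHom.coe_id, id_eq]
        show Psi s hq0 hq1 hc ht (Phi s hq0 hq1 hc ht (GWA.incl kk _ s (el kk q) u))
          = GWA.incl kk _ s (el kk q) u
        rw [Phi_incl s hq0 hq1 hc ht, Psi_theta s hq0 hq1 hc ht, inclHom_apply]
    | x =>
        simp only [Function.comp_apply, AlgHom.coe_comp, AlgHom.coe_id, id_eq]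
        show Psi s hq0 hq1 hc ht (Phi s hq0 hq1 hc ht (GWA.X kk _ s (el kk q)))
          = GWA.X kk _ s (el kk q)
        rw [Phi_X s hq0 hq1 hc ht, map_smul, Psi_F s hq0 hq1 hc ht, smul_smul,
          mul_inv_cancel₀ (hqqne hq0 hq1), one_smul]
    | y =>
        simp only [Function.comp_apply, AlgHom.coe_comp, AlgHom.coe_id, id_eq]
        show Psi s hq0 hq1 hc ht (Phi s hq0 hq1 hc ht (GWA.Y kk _ s (el kk q)))
          = GWA.Y kk _ s (el kk q)
        rw [Phi_Y s hq0 hq1 hc ht, map_smul, Psi_E s hq0 hq1 hc ht, smul_smul,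
          mul_inv_cancel₀ (hqqne hq0 hq1), one_smul]

lemma equiv_apply (hq0 : q ≠ 0) (hq1 : q ^ 2 ≠ 1)
    (hc : s (C Polynomial.X) = C Polynomial.X) (ht : s (T 1) = q ^ 2 • T 1)
    (w : GWA kk (LaurentPolynomial (Polynomial kk)) s (el kk q)) :
    equiv s hq0 hq1 hc ht w = Phi s hq0 hq1 hc ht w := rfl

end GWAUq

/-- For `A = k[c][t,t⁻¹]`, `a = c - (q⁻¹t + qt⁻¹)` and the `k[c]`-algebra
automorphism `σ(t) = q²t`, the generalized Weyl algebra `W_{a,σ}` is isomorphic to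
`U_q(sl₂)` via `t ↦ K`, `c ↦ (q-q⁻¹)²Ω`, `x ↦ (q-q⁻¹)F`, `y ↦ (q-q⁻¹)E`. -/
theorem gwa_equiv_uqsl2 (hq0 : q ≠ 0) (hq1 : q ^ 2 ≠ 1)
    (σ : LaurentPolynomial (Polynomial k) ≃ₐ[k] LaurentPolynomial (Polynomial k))
    (hc : σ (LaurentPolynomial.C Polynomial.X) = LaurentPolynomial.C Polynomial.X)
    (ht : σ (LaurentPolynomial.T 1) = q ^ 2 • LaurentPolynomial.T 1) :
    ∃ e : GWA k (LaurentPolynomial (Polynomial k)) σ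
        (LaurentPolynomial.C Polynomial.X
          - (q⁻¹ • LaurentPolynomial.T 1 + q • LaurentPolynomial.T (-1))) ≃ₐ[k]
        Uqsl2 k q,
      e (GWA.incl k (LaurentPolynomial (Polynomial k)) σ
          (LaurentPolynomial.C Polynomial.X
            - (q⁻¹ • LaurentPolynomial.T 1 + q • LaurentPolynomial.T (-1)))
          (LaurentPolynomial.T 1)) = Uqsl2.K k q ∧
      e (GWA.incl k (LaurentPolynomial (Polynomial k)) σ
          (LaurentPolynomial.C Polynomial.X
            - (q⁻¹ • LaurentPolynomial.T 1 + q • LaurentPolynomial.T (-1)))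
          (LaurentPolynomial.C Polynomial.X)) = (q - q⁻¹) ^ 2 • Uqsl2.Casimir k q ∧
      e (GWA.X k (LaurentPolynomial (Polynomial k)) σ
          (LaurentPolynomial.C Polynomial.X
            - (q⁻¹ • LaurentPolynomial.T 1 + q • LaurentPolynomial.T (-1))))
        = (q - q⁻¹) • Uqsl2.F k q ∧
      e (GWA.Y k (LaurentPolynomial (Polynomial k)) σ
          (LaurentPolynomial.C Polynomial.X
            - (q⁻¹ • LaurentPolynomial.T 1 + q • LaurentPolynomial.T (-1))))
        = (q - q⁻¹) • Uqsl2.E k q := by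
  refine ⟨GWAUq.equiv σ hq0 hq1 hc ht, ?_, ?_, ?_, ?_⟩
  · rw [GWAUq.equiv_apply, GWAUq.Phi_incl σ hq0 hq1 hc ht, GWAUq.theta_T1 hq0]
  · rw [GWAUq.equiv_apply, GWAUq.Phi_incl σ hq0 hq1 hc ht, GWAUq.theta_CX hq0]
    exact (GWAUq.Cas_eq hq0 hq1).symm
  · rw [GWAUq.equiv_apply, GWAUq.Phi_X σ hq0 hq1 hc ht]
  · rw [GWAUq.equiv_apply, GWAUq.Phi_Y σ hq0 hq1 hc ht]

end
end
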